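/- arXiv:2108.13959 — 3 statements merged into one kernel-verified Lean document; each statement's English description precedes it below -/
import Mathlib

section
/- Let D be an Eulerian digraph that immerses a digraph D'. Then D immerses an Eulerian multi-digraph D'' on the same vertex set as D' that contains D' as a subdigraph. -/
open Finset

/-- Number of traversals of the directed edge `(x, y)` by the walk given by the list `l`. -/
def edgeCount {V : Type*} [DecidableEq V] (l : List V) (x y : V) : ℕ :=
  (l.zip l.tail).count (x, y)

/-- A multi-digraph `G` (edge multiplicities `G x y`) immerses a multi-digraph `H` if there is
an injection `f` of vertices and, for each edge of `H` (with multiplicity), a directed path in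
`G` from the image of its tail to the image of its head, such that the total number of
traversals of each edge of `G` is at most its multiplicity (edge-disjointness). -/
def Immerses {V W : Type*} [Fintype V] [Fintype W] [DecidableEq V]
    (G : V → V → ℕ) (H : W → W → ℕ) : Prop :=
  ∃ f : W → V, Function.Injective f ∧
    ∃ P : W → W → ℕ → List V,
      (∀ u v i, i < H u v →
        (P u v i).head? = some (f u) ∧ (P u v i).getLast? = some (f v) ∧
        (P u v i).Nodup ∧ 2 ≤ (P u v i).length) ∧
      (∀ x y : V,
        (∑ u : W, ∑ v : W, ∑ i ∈ Finset.range (H u v), edgeCount (P u v i) x y) ≤ G x y)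

/-- A multi-digraph is Eulerian if every vertex has out-degree equal to in-degree,
counting multiplicities. -/
def IsEulerian {V : Type*} [Fintype V] (M : V → V → ℕ) : Prop :=
  ∀ v, (∑ u, M v u) = ∑ u, M u v

section Aux

variable {V : Type*} [Fintype V] [DecidableEq V]

omit [Fintype V] [DecidableEq V] in
lemma zip_tail_map_fst : ∀ (l : List V), (l.zip l.tail).map Prod.fst = l.dropLast
  | [] => rfl
  | [_] => rfl
  | a :: b :: t => by
      have ih := zip_tail_map_fst (b :: t)
      simp only [List.tail_cons] at ih ⊢
      simp [List.zip_cons_cons, ih]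

omit [Fintype V] [DecidableEq V] in
lemma zip_tail_map_snd : ∀ (l : List V), (l.zip l.tail).map Prod.snd = l.tail
  | [] => rfl
  | [_] => rfl
  | a :: b :: t => by
      have ih := zip_tail_map_snd (b :: t)
      simp only [List.tail_cons] at ih ⊢
      simp [List.zip_cons_cons, ih]

lemma sum_count_fst (lp : List (V × V)) (x : V) :
    ∑ y, lp.count (x, y) = (lp.map Prod.fst).count x := by
  induction lp with
  | nil => simp
  | cons p t ih =>
    obtain ⟨p1, p2⟩ := p
    simp only [List.count_cons, List.map_cons, Finset.sum_add_distrib, ih]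
    congr 1
    simp only [beq_iff_eq, Prod.mk.injEq]
    by_cases h : p1 = x
    · subst h; simp [Finset.sum_ite_eq, Finset.sum_ite_eq']
    · simp [h, fun hh : x = p1 => h hh.symm, Ne.symm h]

lemma sum_count_snd (lp : List (V × V)) (x : V) :
    ∑ y, lp.count (y, x) = (lp.map Prod.snd).count x := by
  induction lp with
  | nil => simp
  | cons p t ih =>
    obtain ⟨p1, p2⟩ := p
    simp only [List.count_cons, List.map_cons, Finset.sum_add_distrib, ih]
    congr 1
    simp only [beq_iff_eq, Prod.mk.injEq]
    by_cases h : p2 = x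
    · subst h; simp [Finset.sum_ite_eq, Finset.sum_ite_eq']
    · simp [h, fun hh : x = p2 => h hh.symm, Ne.symm h]

lemma sum_edgeCount_left (l : List V) (x : V) :
    ∑ y, edgeCount l x y = l.dropLast.count x := by
  rw [← zip_tail_map_fst l, ← sum_count_fst]; rfl

lemma sum_edgeCount_right (l : List V) (x : V) :
    ∑ y, edgeCount l y x = l.tail.count x := by
  rw [← zip_tail_map_snd l, ← sum_count_snd]; rfl

omit [Fintype V] in
lemma count_dropLast_add (l : List V) (hl : l ≠ []) (x : V) :
    l.dropLast.count x + (if l.getLast? = some x then 1 else 0) = l.count x := by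
  conv_rhs => rw [← List.dropLast_append_getLast hl]
  rw [List.count_append, List.getLast?_eq_getLast hl]
  simp only [List.count_singleton, Option.some.injEq]
  by_cases h : l.getLast hl = x <;> simp [h, Ne.symm, beq_iff_eq]

omit [Fintype V] in
lemma count_tail_add (l : List V) (hl : l ≠ []) (x : V) :
    l.tail.count x + (if l.head? = some x then 1 else 0) = l.count x := by
  conv_rhs => rw [← List.cons_head_tail hl]
  rw [List.count_cons, List.head?_eq_head hl]
  simp only [Option.some.injEq]
  by_cases h : l.head hl = x <;> simp [h, Ne.symm, beq_iff_eq, Nat.add_comm]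

/-- per-walk flow balance -/
lemma edgeCount_balance (l : List V) (hl : l ≠ []) (x : V) :
    (∑ y, edgeCount l x y) + (if l.getLast? = some x then 1 else 0)
      = (∑ y, edgeCount l y x) + (if l.head? = some x then 1 else 0) := by
  rw [sum_edgeCount_left, sum_edgeCount_right, count_dropLast_add l hl,
    count_tail_add l hl]

omit [Fintype V] in
lemma zip_tail_suffix : ∀ (l₁ l₂ : List V), l₂ <:+ l₁ →
    List.Sublist (l₂.zip l₂.tail) (l₁.zip l₁.tail) := by
  intro l₁
  induction l₁ with
  | nil => intro l₂ h; rw [List.suffix_nil.mp h]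
  | cons p r ih =>
    intro l₂ h
    rcases List.suffix_cons_iff.mp h with h | h
    · rw [h]
    · refine (ih l₂ h).trans ?_
      match r with
      | [] => simp
      | q :: t =>
        simp only [List.tail_cons, List.zip_cons_cons]
        exact List.Sublist.cons _ (List.Sublist.refl _)

omit [Fintype V] in
lemma edgeCount_suffix_le (l₁ l₂ : List V) (h : l₂ <:+ l₁) (x y : V) :
    edgeCount l₂ x y ≤ edgeCount l₁ x y :=
  (zip_tail_suffix l₁ l₂ h).count_le _

lemma sum_sub_single (g : V → ℕ) (c : V) (h : 1 ≤ g c) :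
    (∑ y, (g y - if y = c then 1 else 0)) + 1 = ∑ y, g y := by
  have key : ∀ y, g y = (g y - if y = c then 1 else 0) + (if y = c then 1 else 0) := by
    intro y
    by_cases hy : y = c
    · subst hy; simp; omega
    · simp [hy]
  conv_rhs => rw [Finset.sum_congr rfl (fun y _ => key y)]
  rw [Finset.sum_add_distrib]
  congr 1
  simp

lemma exists_augPath : ∀ (n : ℕ) (L : V → V → ℕ), (∑ x, ∑ y, L x y) ≤ n →
    (∀ x, L x x = 0) → ∀ a, (∑ y, L y a) < (∑ y, L a y) →
    ∃ (b : V) (l : List V), b ≠ a ∧ l.head? = some a ∧ l.getLast? = some b ∧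
      l.Nodup ∧ 2 ≤ l.length ∧ (∀ x y, edgeCount l x y ≤ L x y) ∧
      (∑ y, L b y) < (∑ y, L y b) := by
  intro n
  induction n with
  | zero =>
    intro L hn hloop a hin
    exfalso
    have h1 : 0 < ∑ y, L a y := lt_of_le_of_lt (Nat.zero_le _) hin
    have h2 : (∑ y, L a y) ≤ ∑ x, ∑ y, L x y :=
      Finset.single_le_sum (f := fun x => ∑ y, L x y) (fun _ _ => Nat.zero_le _) (mem_univ a)
    omega
  | succ n ih =>
    intro L hn hloop a hin
    -- find an edge out of a
    have hex : ∃ c, 0 < L a c := by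
      by_contra h
      push_neg at h
      have : (∑ y, L a y) = 0 := Finset.sum_eq_zero fun y _ => Nat.le_zero.mp (h y)
      omega
    obtain ⟨c, hc⟩ := hex
    have hca : c ≠ a := by
      intro h
      rw [h, hloop a] at hc
      omega
    by_cases hterm : (∑ y, L c y) < (∑ y, L y c)
    · -- direct: path [a, c]
      refine ⟨c, [a, c], hca, rfl, rfl, by simp [Ne.symm hca], by simp, ?_, hterm⟩
      intro x y
      have : edgeCount [a, c] x y = if x = a ∧ y = c then 1 else 0 := by
        simp only [edgeCount, List.zip, List.zipWith, List.count_cons, List.count_nil,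
          beq_iff_eq, Prod.mk.injEq]
        by_cases h1 : x = a ∧ y = c
        · simp [h1.1, h1.2]
        · simp only [Nat.zero_add, if_neg h1]
          simp only [List.tail_cons, List.zipWith_cons_cons, List.zipWith_nil_right,
            List.count_cons, List.count_nil, beq_iff_eq, Prod.mk.injEq]
          rw [if_neg]
          intro hh
          exact h1 ⟨hh.1.symm, hh.2.symm⟩
      rw [this]
      by_cases h1 : x = a ∧ y = c
      · rw [if_pos h1, h1.1, h1.2]; omega
      · rw [if_neg h1]; exact Nat.zero_le _
    · -- remove edge (a, c), recurse from c
      set L' : V → V → ℕ := fun x y => L x y - (if x = a ∧ y = c then 1 else 0) with hL'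
      have hrow : ∀ x y, x ≠ a → L' x y = L x y := by
        intro x y hx
        simp only [hL']
        rw [if_neg (fun h => hx h.1), Nat.sub_zero]
      have hcol : ∀ x y, y ≠ c → L' x y = L x y := by
        intro x y hy
        simp only [hL']
        rw [if_neg (fun h => hy h.2), Nat.sub_zero]
      have houtA : (∑ y, L' a y) + 1 = ∑ y, L a y := by
        have h := sum_sub_single (L a) c hc
        have h2 : ∀ y, L' a y = L a y - (if y = c then 1 else 0) := by
          intro y
          simp only [hL']
          congr 1
          by_cases hy : y = c <;> simp [hy]
        rw [Finset.sum_congr rfl (fun y _ => h2 y)]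
        exact h
      have hinC : (∑ y, L' y c) + 1 = ∑ y, L y c := by
        have h := sum_sub_single (fun y => L y c) a hc
        have h2 : ∀ y, L' y c = L y c - (if y = a then 1 else 0) := by
          intro y
          simp only [hL']
          congr 1
          by_cases hy : y = a <;> simp [hy]
        rw [Finset.sum_congr rfl (fun y _ => h2 y)]
        exact h
      have houtX : ∀ x, x ≠ a → (∑ y, L' x y) = ∑ y, L x y :=
        fun x hx => Finset.sum_congr rfl fun y _ => hrow x y hx
      have hinX : ∀ y, y ≠ c → (∑ x, L' x y) = ∑ x, L x y :=
        fun y hy => Finset.sum_congr rfl fun x _ => hcol x y hy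
      have hle : ∀ x y, L' x y ≤ L x y := fun x y => Nat.sub_le _ _
      have htot : (∑ x, ∑ y, L' x y) ≤ n := by
        have h1 : (∑ x, ∑ y, L' x y) + 1 = ∑ x, ∑ y, L x y := by
          rw [Finset.sum_eq_sum_sdiff_singleton_add (mem_univ a) (fun x => ∑ y, L' x y),
            Finset.sum_eq_sum_sdiff_singleton_add (mem_univ a) (fun x => ∑ y, L x y)]
          rw [Finset.sum_congr rfl (fun x hx => houtX x (by simpa using hx))]
          omega
        omega
      have hloop' : ∀ x, L' x x = 0 := by
        intro x
        have := hloop x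
        have := hle x x
        omega
      have hinC' : (∑ y, L' y c) < ∑ y, L' c y := by
        rw [houtX c hca]
        push_neg at hterm
        omega
      obtain ⟨b, l, hbc, hhead, hlast, hnd, hlen, hec, hbdef⟩ := ih L' htot hloop' c hinC'
      -- b ≠ a
      have hba : b ≠ a := by
        rintro rfl
        have h1 : (∑ y, L' b y) + 1 = ∑ y, L b y := houtA
        have h2 : (∑ y, L' y b) = ∑ y, L y b := by
          apply Finset.sum_congr rfl fun x _ => hcol x b (Ne.symm hca)
        omega
      have hbdefL : (∑ y, L b y) < ∑ y, L y b := by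
        rw [← houtX b hba, ← hinX b hbc] at *
        exact hbdef
      have hlnil : l ≠ [] := by rintro rfl; simp at hhead
      by_cases hmem : a ∈ l
      · -- take the suffix of l starting at a
        obtain ⟨pre, suf, rfl⟩ := List.append_of_mem hmem
        have hsuffix : (a :: suf) <:+ pre ++ a :: suf := ⟨pre, rfl⟩
        have hsufnil : suf ≠ [] := by
          rintro rfl
          rw [List.getLast?_append] at hlast
          simp at hlast
          exact hba hlast.symm
        refine ⟨b, a :: suf, hba, rfl, ?_, ?_, ?_, ?_, hbdefL⟩
        · rw [← hlast, List.getLast?_append]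
          simp [List.getLast?_eq_getLast (List.cons_ne_nil a suf)]
        · exact (List.sublist_append_right pre _).nodup hnd
        · simp only [List.length_cons]
          have := List.length_pos_iff.mpr hsufnil
          omega
        · intro x y
          exact le_trans (le_trans (edgeCount_suffix_le _ _ hsuffix x y) (hec x y)) (hle x y)
      · -- prepend a
        rcases l with _ | ⟨c0, t⟩
        · exact absurd rfl hlnil
        have hc0 : c0 = c := by simpa using hhead
        subst hc0
        refine ⟨b, a :: c0 :: t, hba, rfl, ?_, ?_, ?_, ?_, hbdefL⟩
        · rw [← hlast, List.getLast?_cons_cons]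
        · exact List.nodup_cons.mpr ⟨hmem, hnd⟩
        · simp
        · intro x y
          have hsplit : edgeCount (a :: c0 :: t) x y
              = edgeCount (c0 :: t) x y + (if (x, y) = (a, c0) then 1 else 0) := by
            simp only [edgeCount, List.tail_cons, List.zip_cons_cons, List.count_cons,
              beq_iff_eq]
            by_cases hxy : (x, y) = (a, c0)
            · rw [if_pos hxy, if_pos hxy.symm]
            · rw [if_neg hxy, if_neg (fun h => hxy h.symm)]
          have h2 := hec x y
          by_cases h1 : x = a ∧ y = c0
          · obtain ⟨rfl, rfl⟩ := h1
            rw [hsplit, if_pos rfl]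
            simp [hL'] at h2
            omega
          · rw [hsplit, if_neg (by simpa [Prod.ext_iff] using h1)]
            have h3 := hle x y
            simp only [hL', if_neg h1] at h2
            omega

lemma exists_patch_nil (L : V → V → ℕ) (hbal : ∀ a, (∑ y, L y a) ≥ ∑ y, L a y) :
    ∀ x, (∑ y, L x y) = ∑ y, L y x := by
  intro x
  by_contra hne
  have hlt : (∑ y, L x y) < (∑ y, L y x) :=
    lt_of_le_of_ne (hbal x) hne
  have hsum : (∑ x, ∑ y, L x y) = ∑ x, ∑ y, L y x := Finset.sum_comm
  have : (∑ x, ∑ y, L x y) < ∑ x, ∑ y, L y x :=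
    Finset.sum_lt_sum (fun i _ => hbal i) ⟨x, mem_univ x, hlt⟩
  omega

lemma exists_patch : ∀ (n : ℕ) (L : V → V → ℕ),
    (∑ x, ((∑ y, L x y) - (∑ y, L y x))) ≤ n →
    (∀ x, L x x = 0) →
    ∃ (A : V → V → ℕ) (Q : V → V → ℕ → List V),
      (∀ x y, 0 < A x y →
        (∑ y', L y' x) < (∑ y', L x y') ∧ (∑ y', L y y') < (∑ y', L y' y)) ∧
      (∀ x y i, i < A x y → (Q x y i).head? = some x ∧ (Q x y i).getLast? = some y ∧
        (Q x y i).Nodup ∧ 2 ≤ (Q x y i).length) ∧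
      (∀ x y, (∑ a, ∑ b, ∑ i ∈ Finset.range (A a b), edgeCount (Q a b i) x y) ≤ L x y) ∧
      (∀ x, (∑ y, A x y) + (∑ y, L y x) = (∑ y, A y x) + (∑ y, L x y)) := by
  intro n
  induction n with
  | zero =>
    intro L hn hloop
    refine ⟨fun _ _ => 0, fun _ _ _ => [], by simp, by simp, by simp, ?_⟩
    intro x
    simp only [Finset.sum_const_zero, Nat.zero_add]
    refine (exists_patch_nil L ?_ x).symm
    intro a
    by_contra hlt
    push_neg at hlt
    have h1 : 1 ≤ (∑ y, L a y) - (∑ y, L y a) := by omega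
    have h2 : ((∑ y, L a y) - (∑ y, L y a))
        ≤ ∑ x, ((∑ y, L x y) - (∑ y, L y x)) :=
      Finset.single_le_sum (f := fun x => (∑ y, L x y) - (∑ y, L y x))
        (fun _ _ => Nat.zero_le _) (mem_univ a)
    omega
  | succ n ih =>
    intro L hn hloop
    by_cases hex : ∃ a, (∑ y, L y a) < (∑ y, L a y)
    · obtain ⟨a, hexa⟩ := hex
      obtain ⟨b, l, hba, hhead, hlast, hnd, hlen, hec, hbdef⟩ :=
        exists_augPath (∑ x, ∑ y, L x y) L le_rfl hloop a hexa
      have hlnil : l ≠ [] := by rintro rfl; simp at hhead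
      set L'' : V → V → ℕ := fun x y => L x y - edgeCount l x y with hL''
      have hout'' : ∀ x, (∑ y, L'' x y) + (∑ y, edgeCount l x y) = ∑ y, L x y := by
        intro x
        rw [← Finset.sum_add_distrib]
        refine Finset.sum_congr rfl fun y _ => ?_
        have := hec x y
        simp only [hL'']
        omega
      have hin'' : ∀ x, (∑ y, L'' y x) + (∑ y, edgeCount l y x) = ∑ y, L y x := by
        intro x
        rw [← Finset.sum_add_distrib]
        refine Finset.sum_congr rfl fun y _ => ?_
        have := hec y x
        simp only [hL'']
        omega
      have hu : ∀ x, (∑ y, edgeCount l x y) + (if x = b then 1 else 0)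
          = (∑ y, edgeCount l y x) + (if x = a then 1 else 0) := by
        intro x
        have hbal := edgeCount_balance l hlnil x
        rw [hhead, hlast] at hbal
        simp only [Option.some.injEq] at hbal
        by_cases hxb : x = b <;> by_cases hxa : x = a <;>
          simp only [hxb, hxa, if_pos, if_neg, eq_comm] at hbal ⊢ <;>
          simp_all [eq_comm]
      have hloop'' : ∀ x, L'' x x = 0 := by
        intro x
        have h1 := hloop x
        have : L'' x x ≤ L x x := Nat.sub_le _ _
        omega
      -- the measure decreases
      have hmeas : (∑ x, ((∑ y, L'' x y) - (∑ y, L'' y x))) ≤ n := by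
        have key : ∀ x ∈ univ \ {a},
            ((∑ y, L'' x y) - (∑ y, L'' y x)) ≤ ((∑ y, L x y) - (∑ y, L y x)) := by
          intro x hx
          have hxa : x ≠ a := by simpa using hx
          have h1 := hout'' x
          have h2 := hin'' x
          have h3 := hu x
          by_cases hxb : x = b
          · subst hxb
            rw [if_pos rfl, if_neg hxa] at h3
            omega
          · rw [if_neg hxb, if_neg hxa] at h3
            omega
        have keya : ((∑ y, L'' a y) - (∑ y, L'' y a)) + 1 ≤ ((∑ y, L a y) - (∑ y, L y a)) := by
          have h1 := hout'' a
          have h2 := hin'' a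
          have h3 := hu a
          rw [if_neg (Ne.symm hba), if_pos rfl] at h3
          omega
        have hsplit1 := Finset.sum_eq_sum_sdiff_singleton_add (mem_univ a)
          (fun x => (∑ y, L'' x y) - (∑ y, L'' y x))
        have hsplit2 := Finset.sum_eq_sum_sdiff_singleton_add (mem_univ a)
          (fun x => (∑ y, L x y) - (∑ y, L y x))
        beta_reduce at hsplit1 hsplit2
        have hds := Finset.sum_le_sum key
        omega
      obtain ⟨A', Q', hsupp', hpath', hcap', hbal'⟩ := ih L'' hmeas hloop''
      set A : V → V → ℕ := fun x y => A' x y + (if x = a ∧ y = b then 1 else 0) with hA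
      set Q : V → V → ℕ → List V :=
        fun x y i => if x = a ∧ y = b ∧ i = A' a b then l else Q' x y i with hQdef
      refine ⟨A, Q, ?_, ?_, ?_, ?_⟩
      · -- support
        intro x y hpos
        constructor
        · -- tail endpoint x is excess-out in L
          by_cases hxa : x = a
          · rw [hxa]; exact hexa
          · have hApos : 0 < A' x y := by
              have : (if x = a ∧ y = b then 1 else 0) = 0 := by
                rw [if_neg (fun h => hxa h.1)]
              simp only [hA, this, Nat.add_zero] at hpos
              exact hpos
            have hx := (hsupp' x y hApos).1
            have h1 := hout'' x
            have h2 := hin'' x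
            have h3 := hu x
            by_cases hxb : x = b
            · subst hxb
              rw [if_pos rfl, if_neg hxa] at h3
              omega
            · rw [if_neg hxb, if_neg hxa] at h3
              omega
        · -- head endpoint y is excess-in in L
          by_cases hyb : y = b
          · rw [hyb]; exact hbdef
          · have hApos : 0 < A' x y := by
              have : (if x = a ∧ y = b then 1 else 0) = 0 := by
                rw [if_neg (fun h => hyb h.2)]
              simp only [hA, this, Nat.add_zero] at hpos
              exact hpos
            have hy := (hsupp' x y hApos).2
            have h1 := hout'' y
            have h2 := hin'' y
            have h3 := hu y
            by_cases hya : y = a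
            · subst hya
              rw [if_neg hyb, if_pos rfl] at h3
              omega
            · rw [if_neg hyb, if_neg hya] at h3
              omega
      · -- path data
        intro x y i hi
        by_cases hxy : x = a ∧ y = b
        · by_cases hi' : i = A' a b
          · have hQl : Q x y i = l := by
              simp only [hQdef]
              exact if_pos ⟨hxy.1, hxy.2, hi'⟩
            rw [hQl, hxy.1, hxy.2]
            exact ⟨hhead, hlast, hnd, hlen⟩
          · have hQl : Q x y i = Q' x y i := by
              simp only [hQdef]
              exact if_neg (fun h => hi' h.2.2)
            rw [hQl]
            apply hpath'
            have h1 : i < A' x y + 1 := by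
              have : (if x = a ∧ y = b then 1 else 0) = 1 := if_pos hxy
              simp only [hA, this] at hi
              exact hi
            have h2 : i ≠ A' x y := by rw [hxy.1, hxy.2]; exact hi'
            omega
        · have hQl : Q x y i = Q' x y i := by
            simp only [hQdef]
            exact if_neg (fun h => hxy ⟨h.1, h.2.1⟩)
          rw [hQl]
          apply hpath'
          have : (if x = a ∧ y = b then 1 else 0) = 0 := if_neg hxy
          simp only [hA, this, Nat.add_zero] at hi
          exact hi
      · -- capacity
        intro x y
        have hkey : ∀ p q, (∑ i ∈ Finset.range (A p q), edgeCount (Q p q i) x y)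
            = (∑ i ∈ Finset.range (A' p q), edgeCount (Q' p q i) x y)
              + (if p = a ∧ q = b then edgeCount l x y else 0) := by
          intro p q
          by_cases hpq : p = a ∧ q = b
          · have hApq : A p q = A' p q + 1 := by
              simp only [hA, if_pos hpq]
            rw [hApq, if_pos hpq, Finset.sum_range_succ]
            congr 1
            · refine Finset.sum_congr rfl fun i hi => ?_
              congr 1
              simp only [hQdef]
              refine if_neg fun h => ?_
              rw [← hpq.1, ← hpq.2] at h
              exact absurd (Finset.mem_range.mp hi) (h.2.2 ▸ lt_irrefl _)
            · congr 1
              simp only [hQdef]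
              obtain ⟨rfl, rfl⟩ := hpq
              exact if_pos ⟨rfl, rfl, rfl⟩
          · have hApq : A p q = A' p q := by
              simp only [hA, if_neg hpq, Nat.add_zero]
            rw [hApq, if_neg hpq, Nat.add_zero]
            refine Finset.sum_congr rfl fun i hi => ?_
            congr 1
            simp only [hQdef]
            exact if_neg (fun h => hpq ⟨h.1, h.2.1⟩)
        calc (∑ p, ∑ q, ∑ i ∈ Finset.range (A p q), edgeCount (Q p q i) x y)
            = (∑ p, ∑ q, ((∑ i ∈ Finset.range (A' p q), edgeCount (Q' p q i) x y)
              + (if p = a ∧ q = b then edgeCount l x y else 0))) := by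
              exact Finset.sum_congr rfl fun p _ => Finset.sum_congr rfl fun q _ => hkey p q
          _ = (∑ p, ∑ q, ∑ i ∈ Finset.range (A' p q), edgeCount (Q' p q i) x y)
              + (∑ p, ∑ q, (if p = a ∧ q = b then edgeCount l x y else 0)) := by
              rw [← Finset.sum_add_distrib]
              refine Finset.sum_congr rfl fun p _ => ?_
              rw [← Finset.sum_add_distrib]
          _ = (∑ p, ∑ q, ∑ i ∈ Finset.range (A' p q), edgeCount (Q' p q i) x y)
              + edgeCount l x y := by
              congr 1
              have hinner : ∀ p, (∑ q, (if p = a ∧ q = b then edgeCount l x y else 0))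
                  = if p = a then edgeCount l x y else 0 := by
                intro p
                by_cases hp : p = a
                · simp [hp]
                · simp [hp]
              rw [Finset.sum_congr rfl (fun p _ => hinner p)]
              simp
          _ ≤ L x y := by
              have hc := hcap' x y
              have he := hec x y
              have : L'' x y = L x y - edgeCount l x y := rfl
              omega
      · -- balance
        intro x
        have hArow : (∑ y, A x y) = (∑ y, A' x y) + (if x = a then 1 else 0) := by
          simp only [hA]
          rw [Finset.sum_add_distrib]
          congr 1
          by_cases hx : x = a
          · simp [hx]
          · simp [hx]
        have hAcol : (∑ y, A y x) = (∑ y, A' y x) + (if x = b then 1 else 0) := by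
          simp only [hA]
          rw [Finset.sum_add_distrib]
          congr 1
          by_cases hx : x = b
          · simp [hx]
          · simp [hx]
        have hb' := hbal' x
        have h1 := hout'' x
        have h2 := hin'' x
        have h3 := hu x
        rw [hArow, hAcol]
        by_cases hxa : x = a <;> by_cases hxb : x = b
        · exact absurd (hxa.symm.trans hxb) (Ne.symm hba)
        · rw [if_pos hxa, if_neg hxb] at h3 ⊢
          omega
        · rw [if_neg hxa, if_pos hxb] at h3 ⊢
          omega
        · rw [if_neg hxa, if_neg hxb] at h3 ⊢
          omega
    · push_neg at hex
      refine ⟨fun _ _ => 0, fun _ _ _ => [], by simp, by simp, by simp, ?_⟩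
      intro x
      simp only [Finset.sum_const_zero, Nat.zero_add]
      exact (exists_patch_nil L hex x).symm

end Aux

/-- If an Eulerian (simple, loopless) digraph `D` immerses a digraph `D'`,
then `D` immerses an Eulerian multi-digraph `D''` on the same vertex set as `D'` which
contains `D'` as a subdigraph. -/
theorem stmt_4 {V W : Type*} [Fintype V] [Fintype W] [DecidableEq V]
    (D : V → V → ℕ) (hsimple : ∀ x y, D x y ≤ 1) (hloop : ∀ x, D x x = 0)
    (hDE : IsEulerian D)
    (D' : W → W → ℕ) (h'simple : ∀ x y, D' x y ≤ 1) (h'loop : ∀ x, D' x x = 0)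
    (himm : Immerses D D') :
    ∃ D'' : W → W → ℕ, IsEulerian D'' ∧ (∀ u v, D' u v ≤ D'' u v) ∧ Immerses D D'' := by
  classical
  obtain ⟨f, hf, P, hP, hcap⟩ := himm
  set used : V → V → ℕ :=
    fun x y => ∑ u, ∑ v, ∑ i ∈ Finset.range (D' u v), edgeCount (P u v i) x y with hused
  set L : V → V → ℕ := fun x y => D x y - used x y with hLdef
  have hcap' : ∀ x y, used x y ≤ D x y := hcap
  have hLadd : ∀ x y, L x y + used x y = D x y := by
    intro x y
    have := hcap' x y
    simp only [hLdef]
    omega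
  have hLloop : ∀ x, L x x = 0 := by
    intro x
    have h1 := hcap' x x
    have h2 := hloop x
    simp only [hLdef]
    omega
  -- balance of `used`
  have husedbal : ∀ x, (∑ y, used x y) + (∑ u, ∑ v, D' u v * (if f v = x then 1 else 0))
      = (∑ y, used y x) + (∑ u, ∑ v, D' u v * (if f u = x then 1 else 0)) := by
    intro x
    have hswap1 : (∑ y, used x y)
        = ∑ u, ∑ v, ∑ i ∈ Finset.range (D' u v), (∑ y, edgeCount (P u v i) x y) := by
      simp only [hused]
      rw [Finset.sum_comm]
      refine Finset.sum_congr rfl fun u _ => ?_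
      rw [Finset.sum_comm]
      refine Finset.sum_congr rfl fun v _ => ?_
      rw [Finset.sum_comm]
    have hswap2 : (∑ y, used y x)
        = ∑ u, ∑ v, ∑ i ∈ Finset.range (D' u v), (∑ y, edgeCount (P u v i) y x) := by
      simp only [hused]
      rw [Finset.sum_comm]
      refine Finset.sum_congr rfl fun u _ => ?_
      rw [Finset.sum_comm]
      refine Finset.sum_congr rfl fun v _ => ?_
      rw [Finset.sum_comm]
    rw [hswap1, hswap2, ← Finset.sum_add_distrib, ← Finset.sum_add_distrib]
    refine Finset.sum_congr rfl fun u _ => ?_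
    rw [← Finset.sum_add_distrib, ← Finset.sum_add_distrib]
    refine Finset.sum_congr rfl fun v _ => ?_
    have hper : ∀ i ∈ Finset.range (D' u v),
        (∑ y, edgeCount (P u v i) x y) + (if f v = x then 1 else 0)
          = (∑ y, edgeCount (P u v i) y x) + (if f u = x then 1 else 0) := by
      intro i hi
      obtain ⟨hh, hl, hnd, hlen⟩ := hP u v i (Finset.mem_range.mp hi)
      have hnil : P u v i ≠ [] := by
        intro h
        rw [h] at hlen
        simp at hlen
      have hb := edgeCount_balance (P u v i) hnil x
      rw [hh, hl] at hb
      simpa [Option.some_inj] using hb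
    have hs := Finset.sum_congr rfl hper
    rw [Finset.sum_add_distrib, Finset.sum_add_distrib, Finset.sum_const,
      Finset.card_range] at hs
    simpa [smul_eq_mul, Finset.mul_sum, Finset.sum_mul] using hs
  -- balance of L
  have hLbal : ∀ x, (∑ y, L x y) + (∑ u, ∑ v, D' u v * (if f u = x then 1 else 0))
      = (∑ y, L y x) + (∑ u, ∑ v, D' u v * (if f v = x then 1 else 0)) := by
    intro x
    have h1 : (∑ y, L x y) + (∑ y, used x y) = ∑ y, D x y := by
      rw [← Finset.sum_add_distrib]
      exact Finset.sum_congr rfl fun y _ => hLadd x y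
    have h2 : (∑ y, L y x) + (∑ y, used y x) = ∑ y, D y x := by
      rw [← Finset.sum_add_distrib]
      exact Finset.sum_congr rfl fun y _ => hLadd y x
    have h3 := hDE x
    have h4 := husedbal x
    omega
  -- excess vertices of L are in the image of f
  have himgout : ∀ x, (∑ y, L y x) < (∑ y, L x y) → ∃ w, f w = x := by
    intro x hx
    have h1 := hLbal x
    have hpos : 0 < ∑ u, ∑ v, D' u v * (if f v = x then 1 else 0) := by omega
    by_contra hno
    push_neg at hno
    have : (∑ u, ∑ v, D' u v * (if f v = x then 1 else 0)) = 0 := by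
      refine Finset.sum_eq_zero fun u _ => Finset.sum_eq_zero fun v _ => ?_
      rw [if_neg (hno v), Nat.mul_zero]
    omega
  have himgin : ∀ x, (∑ y, L x y) < (∑ y, L y x) → ∃ w, f w = x := by
    intro x hx
    have h1 := hLbal x
    have hpos : 0 < ∑ u, ∑ v, D' u v * (if f u = x then 1 else 0) := by omega
    by_contra hno
    push_neg at hno
    have : (∑ u, ∑ v, D' u v * (if f u = x then 1 else 0)) = 0 := by
      refine Finset.sum_eq_zero fun u _ => Finset.sum_eq_zero fun v _ => ?_
      rw [if_neg (hno u), Nat.mul_zero]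
    omega
  obtain ⟨A, Q, hsupp, hpathQ, hcapQ, hbalA⟩ :=
    exists_patch (∑ x, ((∑ y, L x y) - (∑ y, L y x))) L le_rfl hLloop
  -- evaluate start/end counters at image points
  have hSout : ∀ w, (∑ u, ∑ v, D' u v * (if f u = f w then 1 else 0)) = ∑ v, D' w v := by
    intro w
    rw [Finset.sum_eq_single w]
    · simp
    · intro u _ hu
      have : f u ≠ f w := fun h => hu (hf h)
      simp [this]
    · simp
  have hSin : ∀ w, (∑ u, ∑ v, D' u v * (if f v = f w then 1 else 0)) = ∑ u, D' u w := by
    intro w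
    refine Finset.sum_congr rfl fun u _ => ?_
    rw [Finset.sum_eq_single w]
    · simp
    · intro v _ hv
      have : f v ≠ f w := fun h => hv (hf h)
      simp [this]
    · simp
  -- sums of A over the image
  have hAout : ∀ w, (∑ v : W, A (f w) (f v)) = ∑ y, A (f w) y := by
    intro w
    rw [← Finset.sum_image (g := f) (f := fun y => A (f w) y)
      (fun u _ u' _ h => hf h)]
    symm
    rw [← Finset.sum_subset (Finset.subset_univ (Finset.univ.image f))]
    intro y _ hy
    by_contra hne
    have hpos : 0 < A (f w) y := Nat.pos_of_ne_zero hne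
    obtain ⟨w', hw'⟩ := himgin y (hsupp (f w) y hpos).2
    exact hy (Finset.mem_image.mpr ⟨w', Finset.mem_univ _, hw'⟩)
  have hAin : ∀ w, (∑ v : W, A (f v) (f w)) = ∑ y, A y (f w) := by
    intro w
    rw [← Finset.sum_image (g := f) (f := fun y => A y (f w))
      (fun u _ u' _ h => hf h)]
    symm
    rw [← Finset.sum_subset (Finset.subset_univ (Finset.univ.image f))]
    intro y _ hy
    by_contra hne
    have hpos : 0 < A y (f w) := Nat.pos_of_ne_zero hne
    obtain ⟨w', hw'⟩ := himgout y (hsupp y (f w) hpos).1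
    exact hy (Finset.mem_image.mpr ⟨w', Finset.mem_univ _, hw'⟩)
  refine ⟨fun u v => D' u v + A (f u) (f v), ?_, fun u v => Nat.le_add_right _ _,
    f, hf, fun u v i => if i < D' u v then P u v i else Q (f u) (f v) (i - D' u v), ?_, ?_⟩
  · -- Eulerian
    intro w
    rw [Finset.sum_add_distrib, Finset.sum_add_distrib, hAout w, hAin w]
    have h1 := hbalA (f w)
    have h2 := hLbal (f w)
    rw [hSout w, hSin w] at h2
    omega
  · -- path data
    intro u v i hi
    have hi2 : i < D' u v + A (f u) (f v) := hi
    beta_reduce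
    by_cases hi' : i < D' u v
    · rw [if_pos hi']
      exact hP u v i hi'
    · rw [if_neg hi']
      exact hpathQ (f u) (f v) (i - D' u v) (by omega)
  · -- capacity
    intro x y
    beta_reduce
    have hkey : ∀ u v, (∑ i ∈ Finset.range (D' u v + A (f u) (f v)),
        edgeCount (if i < D' u v then P u v i else Q (f u) (f v) (i - D' u v)) x y)
        = (∑ i ∈ Finset.range (D' u v), edgeCount (P u v i) x y)
          + (∑ j ∈ Finset.range (A (f u) (f v)), edgeCount (Q (f u) (f v) j) x y) := by
      intro u v
      rw [Finset.sum_range_add]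
      congr 1
      · refine Finset.sum_congr rfl fun i hi => ?_
        rw [if_pos (Finset.mem_range.mp hi)]
      · refine Finset.sum_congr rfl fun j _ => ?_
        rw [if_neg (by omega)]
        congr 2
        omega
    rw [Finset.sum_congr rfl fun u (_ : u ∈ Finset.univ) =>
      Finset.sum_congr rfl fun v (_ : v ∈ Finset.univ) => hkey u v]
    have hsplitsum : (∑ u, ∑ v, ((∑ i ∈ Finset.range (D' u v), edgeCount (P u v i) x y)
        + (∑ j ∈ Finset.range (A (f u) (f v)), edgeCount (Q (f u) (f v) j) x y)))
        = used x y
          + ∑ u, ∑ v, ∑ j ∈ Finset.range (A (f u) (f v)), edgeCount (Q (f u) (f v) j) x y := by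
      rw [Finset.sum_congr rfl fun u (_ : u ∈ Finset.univ) =>
        (Finset.sum_add_distrib (s := Finset.univ)
          (f := fun v => ∑ i ∈ Finset.range (D' u v), edgeCount (P u v i) x y)
          (g := fun v => ∑ j ∈ Finset.range (A (f u) (f v)), edgeCount (Q (f u) (f v) j) x y)),
        Finset.sum_add_distrib]
    rw [hsplitsum]
    have hWV : (∑ u, ∑ v, ∑ j ∈ Finset.range (A (f u) (f v)), edgeCount (Q (f u) (f v) j) x y)
        ≤ ∑ p, ∑ q, ∑ j ∈ Finset.range (A p q), edgeCount (Q p q j) x y := by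
      have step1 : ∀ p : V, (∑ v : W, ∑ j ∈ Finset.range (A p (f v)), edgeCount (Q p (f v) j) x y)
          ≤ ∑ q, ∑ j ∈ Finset.range (A p q), edgeCount (Q p q j) x y := by
        intro p
        rw [← Finset.sum_image (g := f)
          (f := fun q => ∑ j ∈ Finset.range (A p q), edgeCount (Q p q j) x y)
          (fun u _ u' _ h => hf h)]
        exact Finset.sum_le_sum_of_subset (Finset.subset_univ _)
      calc (∑ u, ∑ v, ∑ j ∈ Finset.range (A (f u) (f v)), edgeCount (Q (f u) (f v) j) x y)
          ≤ ∑ u, ∑ q, ∑ j ∈ Finset.range (A (f u) q), edgeCount (Q (f u) q j) x y :=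
            Finset.sum_le_sum fun u _ => step1 (f u)
        _ = ∑ p ∈ Finset.univ.image f, ∑ q, ∑ j ∈ Finset.range (A p q), edgeCount (Q p q j) x y := by
            rw [Finset.sum_image (fun u _ u' _ h => hf h)]
        _ ≤ ∑ p, ∑ q, ∑ j ∈ Finset.range (A p q), edgeCount (Q p q j) x y :=
            Finset.sum_le_sum_of_subset (Finset.subset_univ _)
    have hc := hcapQ x y
    have hl := hLadd x y
    omega
end

section
/- For every t > 0, every graph G contains a subgraph H with average degree at least d(G)/2, minimum degree at least d(G)/4, such that every X ⊆ V(H) with |X| ≤ |H|/2 satisfies e_H(X, Xᶜ) ≥ 32·d(H)·ρ_t(|X|)·|X|, where ρ_t(x) = 0 for x < t and ρ_t(x) = 1/(256·(log₂(4x/t))²) for x ≥ t. -/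
open Finset

/-- Number of edges of a simple graph. -/
noncomputable def nE {V : Type*} (H : SimpleGraph V) : ℕ := Nat.card H.edgeSet

/-- Average degree `2 e(H) / |A|` of a graph `H` with vertex set `A`. -/
noncomputable def avgDeg {V : Type*} (H : SimpleGraph V) (A : Finset V) : ℝ :=
  2 * nE H / A.card

/-- `ρ_t(x) = 0` for `x < t` and `ρ_t(x) = 1/(256 (log₂(4x/t))²)` for `x ≥ t`. -/
noncomputable def rho (t x : ℝ) : ℝ :=
  if x < t then 0 else 1 / (256 * (Real.logb 2 (4 * x / t)) ^ 2)

/-- `(A, H)` is a subgraph of `G` with vertex set `A`. -/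
def IsSubgraphPair {V : Type*} (G : SimpleGraph V) (A : Finset V) (H : SimpleGraph V) : Prop :=
  H ≤ G ∧ ∀ x y, H.Adj x y → x ∈ A ∧ y ∈ A

namespace Stmt8Aux

open scoped Classical

/-- `ℓ_t(u) = max(2, log₂(4u/t))`. -/
noncomputable def ell (t u : ℝ) : ℝ := max 2 (Real.logb 2 (4 * u / t))

/-- weight `w_t(u) = 2 - 1/ℓ_t(u)`. -/
noncomputable def wt (t u : ℝ) : ℝ := 2 - 1 / ell t u

lemma two_le_ell (t u : ℝ) : 2 ≤ ell t u := le_max_left _ _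

lemma ell_pos (t u : ℝ) : 0 < ell t u := lt_of_lt_of_le (by norm_num) (two_le_ell t u)

lemma ell_mono {t u v : ℝ} (ht : 0 < t) (hu : 0 < u) (huv : u ≤ v) : ell t u ≤ ell t v := by
  have h1 : (0:ℝ) < 4 * u / t := by positivity
  refine max_le_max le_rfl (Real.logb_le_logb_of_le (by norm_num) h1 ?_)
  gcongr

lemma ell_eq {t x : ℝ} (ht : 0 < t) (hx : t ≤ x) : ell t x = Real.logb 2 (4 * x / t) := by
  have h2 : (2:ℝ) ≤ Real.logb 2 (4 * x / t) := by
    have : (4:ℝ) ≤ 4 * x / t := by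
      rw [le_div_iff₀ ht]; nlinarith
    calc (2:ℝ) = Real.logb 2 ((2:ℝ)^(2:ℕ)) := by
          rw [Real.logb_pow]; simp [Real.logb_self_eq_one (by norm_num : (1:ℝ) < 2)]
      _ ≤ Real.logb 2 (4 * x / t) := by
          apply Real.logb_le_logb_of_le (by norm_num) (by norm_num)
          norm_num; linarith
  exact max_eq_right h2

lemma wt_le_two (t u : ℝ) : wt t u ≤ 2 := by
  have := ell_pos t u
  have : 0 < 1 / ell t u := by positivity
  unfold wt; linarith

lemma le_wt (t u : ℝ) : (3/2 : ℝ) ≤ wt t u := by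
  have h := two_le_ell t u
  have h0 := ell_pos t u
  have : 1 / ell t u ≤ 1 / 2 := by
    apply div_le_div_of_nonneg_left (by norm_num) (by norm_num) h
  unfold wt; linarith

lemma one_le_wt (t u : ℝ) : (1:ℝ) ≤ wt t u := le_trans (by norm_num) (le_wt t u)

lemma wt_mono {t u v : ℝ} (ht : 0 < t) (hu : 0 < u) (huv : u ≤ v) : wt t u ≤ wt t v := by
  have h1 := ell_pos t u
  have h2 := ell_pos t v
  have := ell_mono ht hu huv
  have : 1 / ell t v ≤ 1 / ell t u := by
    apply div_le_div_of_nonneg_left (by norm_num) h1 this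
  unfold wt; linarith

/-- superadditivity gain of `u ↦ u * wt t u`. -/
lemma gain {t x y : ℝ} (ht : 0 < t) (hx : t ≤ x) (hxy : x ≤ y) :
    x * wt t x + y * wt t y + x / (2 * (ell t x)^2) ≤ (x + y) * wt t (x + y) := by
  have hx0 : 0 < x := lt_of_lt_of_le ht hx
  have hy0 : 0 < y := lt_of_lt_of_le hx0 hxy
  have ha0 : 0 < x + y := by linarith
  set L := ell t x with hL
  set K := ell t y with hK
  set M := ell t (x + y) with hM
  have hL2 : 2 ≤ L := two_le_ell t x
  have hKM : K ≤ M := ell_mono ht hy0 (by linarith)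
  have hK0 : 0 < K := ell_pos t y
  have hM0 : 0 < M := ell_pos t (x+y)
  have hL0 : 0 < L := ell_pos t x
  -- M = L + s, s ≥ 1
  have hs : 1 ≤ M - L := by
    have hLe : L = Real.logb 2 (4 * x / t) := ell_eq ht hx
    have hMe : M = Real.logb 2 (4 * (x + y) / t) := ell_eq ht (by linarith)
    have hne1 : (4 * (x+y) / t) ≠ 0 := by positivity
    have hne2 : (4 * x / t) ≠ 0 := by positivity
    have hdiv : (4 * (x+y) / t) / (4 * x / t) = (x+y)/x := by
      field_simp
    have : M - L = Real.logb 2 ((x+y)/x) := by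
      rw [hLe, hMe, ← Real.logb_div hne1 hne2, hdiv]
    rw [this]
    have h2le : (2:ℝ) ≤ (x+y)/x := by
      rw [le_div_iff₀ hx0]; linarith
    calc (1:ℝ) = Real.logb 2 2 := (Real.logb_self_eq_one (by norm_num)).symm
      _ ≤ Real.logb 2 ((x+y)/x) := Real.logb_le_logb_of_le (by norm_num) (by norm_num) h2le
  -- key: 1/L - 1/M ≥ 1/(2 L^2)
  have hkey : 1 / (2 * L^2) ≤ 1/L - 1/M := by
    have h1 : 1/L - 1/M = (M - L) / (L * M) := by field_simp
    rw [h1, div_le_div_iff₀ (by positivity) (by positivity)]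
    nlinarith [mul_nonneg (mul_nonneg hL0.le (by linarith : (0:ℝ) ≤ M - L - 1))
      (by linarith : (0:ℝ) ≤ 2*L - 1)]
  -- unfold wt
  have hwx : wt t x = 2 - 1/L := rfl
  have hwy : wt t y = 2 - 1/K := rfl
  have hwa : wt t (x+y) = 2 - 1/M := rfl
  rw [hwx, hwy, hwa]
  have hyKM : y * (1/M) ≤ y * (1/K) := by
    apply mul_le_mul_of_nonneg_left _ (le_of_lt hy0)
    apply div_le_div_of_nonneg_left (by norm_num) hK0 hKM
  have hx' : x / (2 * L^2) = x * (1/(2*L^2)) := by ring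
  have hxkey : x * (1/(2*L^2)) ≤ x * (1/L - 1/M) := by
    apply mul_le_mul_of_nonneg_left hkey (le_of_lt hx0)
  nlinarith [hxkey, hyKM]

/-- removal bound: `(a-1) w(a-1) + 1 ≤ a w(a)` for `a ≥ 2`. -/
lemma erase_wt {t a : ℝ} (ht : 0 < t) (ha : 2 ≤ a) : (a-1) * wt t (a-1) + 1 ≤ a * wt t a := by
  have h1 : wt t (a-1) ≤ wt t a := wt_mono ht (by linarith) (by linarith)
  have h2 : (1:ℝ) ≤ wt t a := one_le_wt t a
  nlinarith [le_wt t (a-1)]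



variable {V : Type*} [Fintype V] [DecidableEq V]

/-- ordered adjacent pairs -/
def dp (H : SimpleGraph V) [DecidableRel H.Adj] : Finset (V × V) :=
  Finset.univ.filter fun p => H.Adj p.1 p.2

/-- induced graph on a finset -/
def ind (G : SimpleGraph V) (A : Finset V) : SimpleGraph V where
  Adj x y := G.Adj x y ∧ x ∈ A ∧ y ∈ A
  symm := ⟨fun x y h => ⟨h.1.symm, h.2.2, h.2.1⟩⟩
  loopless := ⟨fun x h => G.loopless.irrefl x h.1⟩

@[simp] lemma ind_adj {G : SimpleGraph V} {A : Finset V} {x y : V} :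
    (ind G A).Adj x y ↔ G.Adj x y ∧ x ∈ A ∧ y ∈ A := Iff.rfl

instance {G : SimpleGraph V} [DecidableRel G.Adj] {A : Finset V} :
    DecidableRel (ind G A).Adj := fun _ _ => instDecidableAnd

variable {G : SimpleGraph V} [DecidableRel G.Adj]

/-- doubled edge count within `A` -/
def m (G : SimpleGraph V) [DecidableRel G.Adj] (A : Finset V) : ℕ := (dp (ind G A)).card

lemma natCard_setOf {α : Type*} [Fintype α] (p : α → Prop) [DecidablePred p] :
    Nat.card {x | p x} = (Finset.univ.filter p).card := by
  rw [Nat.card_coe_set_eq, Set.ncard_eq_toFinset_card', Set.toFinset_setOf]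

lemma dp_card_eq_sum (H : SimpleGraph V) [DecidableRel H.Adj] :
    (dp H).card = ∑ v, (Finset.univ.filter fun w => H.Adj v w).card := by
  rw [dp, Finset.card_filter, ← Finset.univ_product_univ, Finset.sum_product]
  exact Finset.sum_congr rfl fun v _ => (Finset.card_filter _ _).symm

lemma two_nE (H : SimpleGraph V) [DecidableRel H.Adj] : 2 * nE H = (dp H).card := by
  have h1 : nE H = H.edgeFinset.card := by
    rw [nE, Nat.card_eq_fintype_card, SimpleGraph.edgeFinset_card]
  rw [h1, ← SimpleGraph.sum_degrees_eq_twice_card_edges, dp_card_eq_sum]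
  refine Finset.sum_congr rfl fun v _ => ?_
  rw [SimpleGraph.degree, SimpleGraph.neighborFinset_eq_filter]

/-- swap symmetry of filtered double counts -/
lemma dp_swap_card (H : SimpleGraph V) [DecidableRel H.Adj] (P : V → V → Prop)
    [∀ a b, Decidable (P a b)] :
    ((dp H).filter fun p => P p.1 p.2).card = ((dp H).filter fun p => P p.2 p.1).card := by
  refine Finset.card_bij' (fun p _ => p.swap) (fun p _ => p.swap) ?_ ?_ ?_ ?_
  · intro p hp
    simp only [dp, mem_filter, mem_univ, true_and, Prod.fst_swap, Prod.snd_swap] at hp ⊢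
    exact ⟨hp.1.symm, hp.2⟩
  · intro p hp
    simp only [dp, mem_filter, mem_univ, true_and, Prod.fst_swap, Prod.snd_swap] at hp ⊢
    exact ⟨hp.1.symm, hp.2⟩
  · intro p _; rfl
  · intro p _; rfl

lemma dp_fst_card (H : SimpleGraph V) [DecidableRel H.Adj] (v : V) :
    ((dp H).filter fun p => p.1 = v).card = (Finset.univ.filter fun w => H.Adj v w).card := by
  refine Finset.card_bij' (fun p _ => p.2) (fun w _ => (v, w)) ?_ ?_ ?_ ?_
  · intro p hp
    simp only [dp, mem_filter, mem_univ, true_and] at hp ⊢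
    rw [← hp.2]; exact hp.1
  · intro w hw
    simp only [dp, mem_filter, mem_univ, true_and] at hw ⊢
    exact ⟨hw, by trivial⟩
  · rintro ⟨a, b⟩ hp
    simp only [dp, mem_filter, mem_univ, true_and] at hp
    show (v, b) = (a, b)
    rw [hp.2]
  · intro w _; rfl

/-- four-way split of a card by two predicates -/
lemma card_four_split {α : Type*} (s : Finset α) (P Q : α → Prop)
    [DecidablePred P] [DecidablePred Q] :
    s.card = (s.filter fun x => P x ∧ Q x).card + (s.filter fun x => P x ∧ ¬ Q x).card
      + ((s.filter fun x => ¬ P x ∧ Q x).card + (s.filter fun x => ¬ P x ∧ ¬ Q x).card) := by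
  simp only [Finset.card_filter, ← Finset.sum_add_distrib]
  rw [Finset.card_eq_sum_ones]
  refine Finset.sum_congr rfl fun p _ => ?_
  by_cases h1 : P p <;> by_cases h2 : Q p <;> simp [h1, h2]

lemma m_split (G : SimpleGraph V) [DecidableRel G.Adj] {X A : Finset V} (hXA : X ⊆ A) :
    m G A = m G X + m G (A \ X)
      + 2 * ((dp (ind G A)).filter fun p => p.1 ∈ X ∧ p.2 ∉ X).card := by
  have h0 := card_four_split (dp (ind G A)) (fun p => p.1 ∈ X) (fun p => p.2 ∈ X)
  have hX : ((dp (ind G A)).filter fun p => (p.1 ∈ X ∧ p.2 ∈ X)) = dp (ind G X) := by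
    ext p
    simp only [dp, mem_filter, mem_univ, true_and, ind_adj]
    constructor
    · rintro ⟨⟨h, _, _⟩, h1, h2⟩; exact ⟨h, h1, h2⟩
    · rintro ⟨h, h1, h2⟩; exact ⟨⟨h, hXA h1, hXA h2⟩, h1, h2⟩
  have hY : ((dp (ind G A)).filter fun p => (¬ p.1 ∈ X ∧ ¬ p.2 ∈ X)) = dp (ind G (A \ X)) := by
    ext p
    simp only [dp, mem_filter, mem_univ, true_and, ind_adj, Finset.mem_sdiff]
    tauto
  have hsw : ((dp (ind G A)).filter fun p => (¬ p.1 ∈ X ∧ p.2 ∈ X)).card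
      = ((dp (ind G A)).filter fun p => (p.1 ∈ X ∧ ¬ p.2 ∈ X)).card := by
    rw [dp_swap_card (ind G A) (fun a b => ¬ a ∈ X ∧ b ∈ X)]
    congr 1
    ext p
    simp only [mem_filter]
    tauto
  rw [m, h0, hX, hY, hsw, m, m]
  ring

lemma m_erase (G : SimpleGraph V) [DecidableRel G.Adj] {A : Finset V} {v : V} (hv : v ∈ A) :
    m G A = m G (A.erase v) + 2 * (Finset.univ.filter fun w => (ind G A).Adj v w).card := by
  have h0 := card_four_split (dp (ind G A)) (fun p => p.1 = v) (fun p => p.2 = v)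
  have hdiag : ((dp (ind G A)).filter fun p => (p.1 = v ∧ p.2 = v)) = ∅ := by
    ext p
    simp only [dp, mem_filter, mem_univ, true_and, Finset.notMem_empty, iff_false, not_and]
    intro hadj h1 h2
    rw [h1, h2] at hadj
    exact (ind G A).loopless.irrefl v hadj
  have h1 : ((dp (ind G A)).filter fun p => (p.1 = v ∧ ¬ p.2 = v)).card
      = (Finset.univ.filter fun w => (ind G A).Adj v w).card := by
    rw [← dp_fst_card (ind G A) v]
    congr 1
    ext p
    simp only [dp, mem_filter, mem_univ, true_and]
    constructor
    · rintro ⟨h, h1, _⟩; exact ⟨h, h1⟩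
    · rintro ⟨h, h1⟩
      refine ⟨h, h1, ?_⟩
      rintro rfl
      rw [h1] at h
      exact (ind G A).loopless.irrefl _ h
  have h2 : ((dp (ind G A)).filter fun p => (¬ p.1 = v ∧ p.2 = v)).card
      = (Finset.univ.filter fun w => (ind G A).Adj v w).card := by
    rw [dp_swap_card (ind G A) (fun a b => ¬ a = v ∧ b = v), ← h1]
    congr 1
    ext p
    simp only [mem_filter]
    tauto
  have hE : ((dp (ind G A)).filter fun p => (¬ p.1 = v ∧ ¬ p.2 = v)) = dp (ind G (A.erase v)) := by
    ext p
    simp only [dp, mem_filter, mem_univ, true_and, ind_adj, Finset.mem_erase]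
    tauto
  rw [m, h0, hdiag, hE, h1, h2, m]
  simp only [Finset.card_empty]
  ring

lemma key_ineq {Ma E S c g : ℝ} (h1 : E ≤ Ma) (h2 : 0 ≤ c) (h3 : c ≤ 1)
    (h4 : S + g ≤ E) (h5 : E * c ≤ g) : Ma * c + S ≤ Ma := by
  nlinarith [mul_le_mul_of_nonneg_left h3 (sub_nonneg.mpr h1)]

end Stmt8Aux


set_option maxHeartbeats 1000000 in
open Stmt8Aux in
/-- For every `t > 0`, every graph `G` contains a subgraph `H` (vertex set
`A`) with average degree at least `d(G)/2` and minimum degree at least `d(G)/4` that is a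
`t`-edge-expander: every `X ⊆ A` with `|X| ≤ |A|/2` satisfies
`e_H(X, Xᶜ) ≥ 32 d(H) ρ_t(|X|) |X|`. -/
theorem stmt_8 {V : Type*} [Fintype V] (G : SimpleGraph V) (t : ℝ) (ht : 0 < t) :
    ∃ (A : Finset V) (H : SimpleGraph V), IsSubgraphPair G A H ∧
      avgDeg G Finset.univ / 2 ≤ avgDeg H A ∧
      (∀ v ∈ A, avgDeg G Finset.univ / 4 ≤ (Nat.card {w | H.Adj v w} : ℝ)) ∧
      (∀ X ⊆ A, (X.card : ℝ) ≤ (A.card : ℝ) / 2 →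
        32 * avgDeg H A * rho t X.card * X.card ≤
          (Nat.card {p : V × V | H.Adj p.1 p.2 ∧ p.1 ∈ X ∧ p.2 ∉ X} : ℝ)) := by
  classical
  by_cases hE : (dp G).card = 0
  · -- trivial case : no edges
    have hnE : nE G = 0 := by
      have := two_nE G
      omega
    have havg0 : avgDeg G Finset.univ = 0 := by
      rw [avgDeg, hnE]; simp
    refine ⟨∅, ⊥, ⟨bot_le, fun x y h => absurd h (by simp)⟩, ?_, ?_, ?_⟩
    · rw [havg0]
      simp [avgDeg]
    · intro v hv; simp at hv
    · intro X hX _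
      rw [Finset.subset_empty] at hX
      subst hX
      have h0 : 32 * avgDeg (⊥ : SimpleGraph V) (∅ : Finset V) * rho t (∅ : Finset V).card
          * ((∅ : Finset V).card : ℝ) = 0 := by simp
      rw [h0]
      exact Nat.cast_nonneg _
  · -- main case
    have hdp : 0 < (dp G).card := Nat.pos_of_ne_zero hE
    obtain ⟨p0, hp0⟩ := Finset.card_pos.mp hdp
    have hV : Nonempty V := ⟨p0.1⟩
    have hn : 0 < Fintype.card V := Fintype.card_pos
    have hnR : (0:ℝ) < Fintype.card V := by exact_mod_cast hn
    set d : ℝ := ((dp G).card : ℝ) / (Fintype.card V) with hd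
    have hd0 : 0 < d := by positivity
    have havg : avgDeg G Finset.univ = d := by
      rw [avgDeg, Finset.card_univ, hd]
      congr 1
      have := two_nE G
      push_cast [← this]
      ring
    -- the density predicate
    set P : Finset V → Prop :=
      fun B => B.Nonempty ∧ d / 2 * B.card * wt t B.card ≤ (m G B : ℝ) with hP
    have hPuniv : P Finset.univ := by
      constructor
      · exact Finset.univ_nonempty
      · have hmu : m G Finset.univ = (dp G).card := by
          unfold m
          congr 1
          ext p
          simp [dp, ind_adj]
        rw [hmu, Finset.card_univ]
        have h1 : d * (Fintype.card V) = ((dp G).card : ℝ) := by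
          rw [hd, div_mul_cancel₀ _ hnR.ne']
        nlinarith [wt_le_two t (Fintype.card V : ℝ), hd0.le, hnR]
    obtain ⟨A, hAmem, hAmin⟩ := Finset.exists_min_image
      ((Finset.univ : Finset (Finset V)).filter P) Finset.card
      ⟨Finset.univ, by simp only [Finset.mem_filter, Finset.mem_univ, true_and]; exact hPuniv⟩
    have hPA : P A := (Finset.mem_filter.mp hAmem).2
    have hnP : ∀ B : Finset V, B.card < A.card → B.Nonempty →
        (m G B : ℝ) < d / 2 * B.card * wt t B.card := by
      intro B hlt hne
      by_contra h
      push_neg at h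
      have : A.card ≤ B.card := hAmin B (by simp [hP, hne, h])
      omega
    have hA1 : 1 ≤ A.card := Finset.card_pos.mpr hPA.1
    have haR : (1:ℝ) ≤ A.card := by exact_mod_cast hA1
    have hmA : d / 2 * A.card * wt t A.card ≤ (m G A : ℝ) := hPA.2
    have hmApos : (0:ℝ) < (m G A : ℝ) := by
      refine lt_of_lt_of_le ?_ hmA
      have h1 : (0:ℝ) < d / 2 := by linarith
      have h2 : (0:ℝ) < (A.card : ℝ) := by linarith
      have h3 : (0:ℝ) < wt t (A.card : ℝ) := by nlinarith [le_wt t (A.card : ℝ)]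
      positivity
    have ha2 : 2 ≤ A.card := by
      have hne : (dp (ind G A)).Nonempty := by
        rw [← Finset.card_pos, ← m]
        exact_mod_cast hmApos
      obtain ⟨q, hq⟩ := hne
      have hq' : (ind G A).Adj q.1 q.2 := by
        simpa [dp] using hq
      obtain ⟨hadj, h1, h2⟩ := hq'
      exact Finset.one_lt_card.mpr ⟨q.1, h1, q.2, h2, G.ne_of_adj hadj⟩
    have ha2R : (2:ℝ) ≤ A.card := by exact_mod_cast ha2
    have havgH : avgDeg (ind G A) A = (m G A : ℝ) / A.card := by
      rw [avgDeg]
      congr 1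
      have h2 := two_nE (ind G A)
      rw [← m] at h2
      push_cast [← h2]
      ring
    have haRpos : (0:ℝ) < A.card := by linarith
    refine ⟨A, ind G A, ⟨?_, fun x y h => ⟨h.2.1, h.2.2⟩⟩, ?_, ?_, ?_⟩
    · intro x y h
      exact h.1
    · -- average degree
      rw [havg, havgH, le_div_iff₀ haRpos]
      nlinarith [one_le_wt t (A.card : ℝ), hd0.le]
    · -- minimum degree
      intro v hv
      rw [havg]
      have hbr : Nat.card {w | (ind G A).Adj v w}
          = (Finset.univ.filter fun w => (ind G A).Adj v w).card := natCard_setOf _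
      rw [hbr]
      by_contra hcon
      push_neg at hcon
      set degv := (Finset.univ.filter fun w => (ind G A).Adj v w).card with hdegv
      have hsplit := m_erase G hv
      have hA'lt : (A.erase v).card < A.card := Finset.card_erase_lt_of_mem hv
      have hA'card : (A.erase v).card = A.card - 1 := Finset.card_erase_of_mem hv
      have hA'ne : (A.erase v).Nonempty := by
        rw [← Finset.card_pos]
        omega
      have hm' := hnP (A.erase v) hA'lt hA'ne
      have hcast : ((A.erase v).card : ℝ) = (A.card : ℝ) - 1 := by
        rw [hA'card]
        push_cast [Nat.cast_sub hA1]
        ring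
      rw [hcast] at hm'
      have hwkey := erase_wt (t := t) (a := (A.card : ℝ)) ht ha2R
      have hsplitR : (m G A : ℝ) = (m G (A.erase v) : ℝ) + 2 * degv := by
        rw [hsplit]; push_cast; ring
      nlinarith [hd0.le]
    · -- expansion
      intro X hXA hX2
      rcases lt_or_ge (X.card : ℝ) t with hxt | hxt
      · rw [rho, if_pos hxt]
        have h0 : 32 * avgDeg (ind G A) A * 0 * (X.card:ℝ) = 0 := by ring
        rw [h0]
        exact Nat.cast_nonneg _
      · -- big set case
        have hxR0 : (0:ℝ) < X.card := lt_of_lt_of_le ht hxt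
        have hx0 : X.Nonempty := by
          rw [← Finset.card_pos]
          exact_mod_cast hxR0
        have hXle : X.card ≤ A.card := Finset.card_le_card hXA
        have hYcard : (A \ X).card = A.card - X.card := Finset.card_sdiff_of_subset hXA
        have hyR : ((A \ X).card : ℝ) = (A.card : ℝ) - X.card := by
          rw [hYcard]
          push_cast [Nat.cast_sub hXle]
          ring
        have hxy : (X.card : ℝ) ≤ ((A \ X).card : ℝ) := by
          rw [hyR]; linarith
        have hy0 : (A \ X).Nonempty := by
          rw [← Finset.card_pos]
          have h9 : (0:ℝ) < ((A \ X).card : ℝ) := by linarith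
          exact_mod_cast h9
        have hXlt : X.card < A.card := by
          have h1 : 1 ≤ (A \ X).card := Finset.card_pos.mpr hy0
          omega
        have hYlt : (A \ X).card < A.card := by
          have h1 : 1 ≤ X.card := Finset.card_pos.mpr hx0
          omega
        have hmX := hnP X hXlt hx0
        have hmY := hnP (A \ X) hYlt hy0
        have hsplit := m_split G hXA
        have hbr : (Nat.card {p : V × V | (ind G A).Adj p.1 p.2 ∧ p.1 ∈ X ∧ p.2 ∉ X} : ℕ)
            = ((dp (ind G A)).filter fun p => p.1 ∈ X ∧ p.2 ∉ X).card := by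
          rw [natCard_setOf, dp, Finset.filter_filter]
        set L := ell t (X.card : ℝ) with hLdef
        have hLeq : L = Real.logb 2 (4 * (X.card : ℝ) / t) := ell_eq ht hxt
        have hL2 : 2 ≤ L := two_le_ell t _
        have hLpos : (0:ℝ) < L := by linarith
        have hL4 : (4:ℝ) ≤ L ^ 2 := by nlinarith
        have hrho : rho t (X.card : ℝ) = 1 / (256 * L ^ 2) := by
          rw [rho, if_neg (not_lt.mpr hxt), hLeq]
        -- the key inequality
        have hgain := gain (t := t) (x := (X.card : ℝ)) (y := ((A \ X).card : ℝ)) ht hxt hxy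
        have hxya : (X.card : ℝ) + ((A \ X).card : ℝ) = (A.card : ℝ) := by
          rw [hyR]; ring
        rw [hxya, ← hLdef] at hgain
        have hd2 : (0:ℝ) ≤ d / 2 := by linarith
        have hgain' : d / 2 * ((X.card : ℝ) * wt t (X.card : ℝ))
              + d / 2 * (((A \ X).card : ℝ) * wt t ((A \ X).card : ℝ))
              + d / 2 * ((X.card : ℝ) / (2 * L ^ 2))
            ≤ d / 2 * ((A.card : ℝ) * wt t (A.card : ℝ)) := by
          nlinarith [mul_le_mul_of_nonneg_left hgain hd2]
        have hden : (0:ℝ) < 4 * (A.card : ℝ) * L ^ 2 :=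
          mul_pos (mul_pos (by norm_num : (0:ℝ) < 4) haRpos)
            (lt_of_lt_of_le (by norm_num) hL4)
        have hcle : (X.card : ℝ) / (4 * (A.card : ℝ) * L ^ 2) ≤ 1 := by
          rw [div_le_one hden]
          nlinarith [hL4, haRpos.le, hX2]
        have hEc : d / 2 * ((A.card : ℝ) * wt t (A.card : ℝ))
              * ((X.card : ℝ) / (4 * (A.card : ℝ) * L ^ 2))
            = d / 2 * wt t (A.card : ℝ) * ((X.card : ℝ) / (4 * L ^ 2)) := by
          field_simp
        have hEc2 : d / 2 * ((A.card : ℝ) * wt t (A.card : ℝ))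
              * ((X.card : ℝ) / (4 * (A.card : ℝ) * L ^ 2))
            ≤ d / 2 * ((X.card : ℝ) / (2 * L ^ 2)) := by
          rw [hEc]
          have h1 : wt t (A.card : ℝ) * ((X.card : ℝ) / (4 * L ^ 2))
              ≤ 2 * ((X.card : ℝ) / (4 * L ^ 2)) :=
            mul_le_mul_of_nonneg_right (wt_le_two t _)
              (div_nonneg (Nat.cast_nonneg _)
                (mul_nonneg (by norm_num) (sq_nonneg L)))
          calc d / 2 * wt t (A.card : ℝ) * ((X.card : ℝ) / (4 * L ^ 2))
              = d / 2 * (wt t (A.card : ℝ) * ((X.card : ℝ) / (4 * L ^ 2))) := by ring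
            _ ≤ d / 2 * (2 * ((X.card : ℝ) / (4 * L ^ 2))) := mul_le_mul_of_nonneg_left h1 hd2
            _ = d / 2 * ((X.card : ℝ) / (2 * L ^ 2)) := by ring
        have hmA' : d / 2 * ((A.card : ℝ) * wt t (A.card : ℝ)) ≤ (m G A : ℝ) := by
          calc d / 2 * ((A.card : ℝ) * wt t (A.card : ℝ))
              = d / 2 * (A.card : ℝ) * wt t (A.card : ℝ) := by ring
            _ ≤ (m G A : ℝ) := hmA
        have hkey : (m G A : ℝ) * ((X.card : ℝ) / (4 * (A.card : ℝ) * L ^ 2))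
              + (d / 2 * ((X.card : ℝ) * wt t (X.card : ℝ))
              + d / 2 * (((A \ X).card : ℝ) * wt t ((A \ X).card : ℝ)))
            ≤ (m G A : ℝ) := by
          exact key_ineq hmA' (div_nonneg (Nat.cast_nonneg _) hden.le) hcle hgain' hEc2
        have hsplitR : (m G A : ℝ) = (m G X : ℝ) + (m G (A \ X) : ℝ)
            + 2 * (((dp (ind G A)).filter fun p => p.1 ∈ X ∧ p.2 ∉ X).card : ℝ) := by
          rw [hsplit]; push_cast; ring
        -- final assembly
        rw [havgH, hrho, hbr]
        have hfin : 32 * ((m G A : ℝ) / (A.card : ℝ)) * (1 / (256 * L ^ 2)) * (X.card : ℝ)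
            = (m G A : ℝ) * ((X.card : ℝ) / (4 * (A.card : ℝ) * L ^ 2)) / 2 := by
          field_simp
          ring
        rw [hfin]
        have hmXR : (m G X : ℝ) < d / 2 * ((X.card : ℝ) * wt t (X.card : ℝ)) := by
          calc (m G X : ℝ) < d / 2 * (X.card : ℝ) * wt t (X.card : ℝ) := hmX
            _ = d / 2 * ((X.card : ℝ) * wt t (X.card : ℝ)) := by ring
        have hmYR : (m G (A \ X) : ℝ)
            < d / 2 * (((A \ X).card : ℝ) * wt t ((A \ X).card : ℝ)) := by
          calc (m G (A \ X) : ℝ)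
              < d / 2 * ((A \ X).card : ℝ) * wt t ((A \ X).card : ℝ) := hmY
            _ = d / 2 * (((A \ X).card : ℝ) * wt t ((A \ X).card : ℝ)) := by ring
        linarith [hkey, hsplitR, hmXR, hmYR]
end

section
/- For every t > 0, every graph G contains a subgraph H with average degree at least d(G)/2 and minimum degree at least d(G)/4 that is a robust t-vertex-expander: for every X ⊆ V(H) with |X| ≤ |H|/2 and every subgraph F ⊆ H with e(F) ≤ d(H)·ρ_t(|X|)·|X|, we have |N_{H∖F}(X)| ≥ 2·ρ_t(|X|)·|X|. -/
open Finset

noncomputable def Lfun (t y : ℝ) : ℝ := max 2 (Real.logb 2 (4*y/t))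
noncomputable def gfun (t y : ℝ) : ℝ := y * (2 - 1/Lfun t y)

lemma two_le_Lfun (t y : ℝ) : 2 ≤ Lfun t y := le_max_left _ _

lemma Lfun_pos (t y : ℝ) : 0 < Lfun t y := lt_of_lt_of_le (by norm_num) (two_le_Lfun t y)

lemma factor_lb (t y : ℝ) : (3:ℝ)/2 ≤ 2 - 1/Lfun t y := by
  have h := two_le_Lfun t y
  have : 1/Lfun t y ≤ 1/2 := by
    apply one_div_le_one_div_of_le (by norm_num) h
  linarith

lemma factor_ub (t y : ℝ) : 2 - 1/Lfun t y ≤ 2 := by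
  have := Lfun_pos t y
  have : 0 ≤ 1/Lfun t y := by positivity
  linarith

lemma Lfun_mono (t : ℝ) (ht : 0 < t) {y z : ℝ} (h0 : 0 ≤ y) (h : y ≤ z) :
    Lfun t y ≤ Lfun t z := by
  rcases eq_or_lt_of_le h0 with rfl | h0'
  · have : Lfun t 0 = 2 := by
      simp only [Lfun, mul_zero, zero_div, Real.logb_zero]
      norm_num
    rw [this]; exact two_le_Lfun t z
  · have hz : 0 < z := lt_of_lt_of_le h0' h
    unfold Lfun
    apply max_le (le_max_left _ _)
    refine le_trans ?_ (le_max_right _ _)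
    rw [Real.logb_le_logb (by norm_num) (by positivity) (by positivity)]
    gcongr

lemma gfun_mono (t : ℝ) (ht : 0 < t) {y z : ℝ} (h0 : 0 ≤ y) (h : y ≤ z) :
    gfun t y ≤ gfun t z := by
  unfold gfun
  apply mul_le_mul h ?_ (by linarith [factor_lb t y]) (by linarith)
  have := Lfun_mono t ht h0 h
  have h1 : 1/Lfun t z ≤ 1/Lfun t y := one_div_le_one_div_of_le (Lfun_pos t y) this
  linarith

lemma gfun_lb (t y : ℝ) (h0 : 0 ≤ y) : 3/2*y ≤ gfun t y := by
  unfold gfun; nlinarith [factor_lb t y]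

lemma gfun_ub (t y : ℝ) (h0 : 0 ≤ y) : gfun t y ≤ 2*y := by
  unfold gfun; nlinarith [factor_ub t y]

lemma logb_four : Real.logb 2 4 = 2 := by
  rw [show (4:ℝ) = 2^(2:ℕ) by norm_num, Real.logb_pow, Real.logb_self_eq_one (by norm_num)]
  norm_num

lemma two_le_logb {t x : ℝ} (ht : 0 < t) (htx : t ≤ x) : 2 ≤ Real.logb 2 (4*x/t) := by
  have h4 : (4:ℝ) ≤ 4*x/t := by rw [le_div_iff₀ ht]; nlinarith
  exact le_trans (le_of_eq logb_four.symm)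
    ((Real.logb_le_logb (by norm_num) (by norm_num) (by positivity)).mpr h4)

lemma Lfun_eq {t x : ℝ} (ht : 0 < t) (htx : t ≤ x) :
    Lfun t x = Real.logb 2 (4*x/t) := max_eq_right (two_le_logb ht htx)

theorem key_numeric (L r : ℝ) (hL : 2 ≤ L) (hr : r * (256*L^2) = 1) :
    (1+2*r)*(2 - 1/(L+3*r)) + 4*r + 1/(L+1) < 2 := by
  have hL0 : 0 < L := by linarith
  have hr0 : 0 < r := by nlinarith [sq_nonneg L]
  have hru : r ≤ 1/1024 := by nlinarith [sq_nonneg (L-2), sq_nonneg L]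
  have h1 : 0 < L + 3*r := by linarith
  have h2 : 0 < L + 1 := by linarith
  have hD : (L+3*r)*(L+1) ≤ (9/4)*L^2 := by nlinarith
  have hDpos : 0 < (L+3*r)*(L+1) := by positivity
  have h3 : (1+2*r)/(L+3*r) - 1/(L+1) = (1+2*r*L-r)/((L+3*r)*(L+1)) := by
    field_simp; ring
  have hnum : (1:ℝ) ≤ 1+2*r*L-r := by nlinarith
  have h4 : 1/((9/4)*L^2) ≤ (1+2*r*L-r)/((L+3*r)*(L+1)) :=
    div_le_div₀ (by linarith) hnum hDpos hD
  have h5 : 1/((9/4)*L^2) = 1024*r/9 := by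
    rw [div_eq_div_iff (by positivity) (by norm_num)]
    nlinarith
  have h6 : 8*r < (1+2*r)/(L+3*r) - 1/(L+1) := by
    rw [h3]; rw [h5] at h4; linarith
  have expand : (1+2*r)*(2 - 1/(L+3*r)) = 2+4*r - (1+2*r)/(L+3*r) := by ring
  linarith

theorem key_ineq (t x a L r : ℝ) (ht : 0 < t) (htx : t ≤ x) (hxa : 2*x ≤ a)
    (hL : L = Real.logb 2 (4*x/t)) (hrr : r = 1/(256*L^2)) :
    gfun t (x*(1+2*r)) + gfun t (a-x) + 4*r*x < gfun t a := by
  have hx0 : 0 < x := lt_of_lt_of_le ht htx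
  have h2L : 2 ≤ L := hL ▸ two_le_logb ht htx
  have hL0 : 0 < L := by linarith
  have hr_mul : r * (256*L^2) = 1 := by rw [hrr]; field_simp
  have hr0 : 0 < r := by rw [hrr]; positivity
  have hru : r ≤ 1/1024 := by nlinarith [sq_nonneg (L-2), sq_nonneg L]
  have ha0 : 0 < a := by linarith
  have hax : 0 ≤ a - x := by linarith
  -- bound A3
  have hA3 : Lfun t (x*(1+2*r)) ≤ L + 3*r := by
    unfold Lfun
    apply max_le (by linarith)
    have hmul : 4*(x*(1+2*r))/t = (4*x/t) * (1+2*r) := by ring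
    rw [hmul, Real.logb_mul (by positivity) (by positivity), ← hL]
    have hlog : Real.logb 2 (1+2*r) ≤ 3*r := by
      unfold Real.logb
      have hlog1 : Real.log (1+2*r) ≤ 2*r := by
        have := Real.log_le_sub_one_of_pos (show (0:ℝ) < 1+2*r by linarith)
        linarith
      have hlog2 : (0:ℝ) < Real.log 2 := Real.log_pos (by norm_num)
      rw [div_le_iff₀ hlog2]
      nlinarith [Real.log_two_gt_d9]
    linarith
  -- bound A1 from below
  have hA1 : L + 1 ≤ Lfun t a := by
    have h8 : Real.logb 2 (8*x/t) = L + 1 := by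
      have : 8*x/t = (4*x/t) * 2 := by ring
      rw [this, Real.logb_mul (by positivity) (by norm_num), ← hL,
        Real.logb_self_eq_one (by norm_num)]
    refine le_trans ?_ (le_max_right _ _)
    rw [← h8]
    rw [Real.logb_le_logb (by norm_num) (by positivity) (by positivity)]
    rw [div_le_div_iff₀ (by positivity) (by positivity)]
    nlinarith
  have hA2 : Lfun t (a-x) ≤ Lfun t a := Lfun_mono t ht hax (by linarith)
  set A1 := Lfun t a with hA1d
  set A2 := Lfun t (a-x) with hA2d
  set A3 := Lfun t (x*(1+2*r)) with hA3d
  have hA1p : 0 < A1 := Lfun_pos t a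
  have hA2p : 0 < A2 := Lfun_pos t (a-x)
  have hA3p : 0 < A3 := Lfun_pos t (x*(1+2*r))
  have hb1 : 1/(L+3*r) ≤ 1/A3 := one_div_le_one_div_of_le hA3p hA3
  have hb2 : 1/A1 ≤ 1/A2 := one_div_le_one_div_of_le hA2p hA2
  have hb3 : 1/A1 ≤ 1/(L+1) := one_div_le_one_div_of_le (by linarith) hA1
  -- term bounds
  have t1 : gfun t (x*(1+2*r)) ≤ x*(1+2*r)*(2 - 1/(L+3*r)) := by
    unfold gfun
    rw [← hA3d]
    apply mul_le_mul_of_nonneg_left (by linarith) (by positivity)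
  have t2 : gfun t (a-x) ≤ (a-x)*(2 - 1/A1) := by
    unfold gfun
    rw [← hA2d]
    apply mul_le_mul_of_nonneg_left (by linarith) hax
  have hga : gfun t a = a*(2 - 1/A1) := by unfold gfun; rw [← hA1d]
  have hnum := key_numeric L r h2L hr_mul
  have t3 : x*(1+2*r)*(2 - 1/(L+3*r)) + 4*r*x < x*(2 - 1/A1) := by
    have hc : (1+2*r)*(2 - 1/(L+3*r)) + 4*r < 2 - 1/A1 := by
      have : 2 - 1/(L+1) ≤ 2 - 1/A1 := by linarith
      linarith
    nlinarith
  have final : x*(1+2*r)*(2 - 1/(L+3*r)) + (a-x)*(2 - 1/A1) + 4*r*x < a*(2 - 1/A1) := by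
    nlinarith
  rw [hga]
  linarith

open Finset

/-- restriction of G to vertex set A -/
def Gres {V : Type*} (G : SimpleGraph V) (A : Finset V) : SimpleGraph V where
  Adj x y := G.Adj x y ∧ x ∈ A ∧ y ∈ A
  symm := ⟨fun x y ⟨h, hx, hy⟩ => ⟨h.symm, hy, hx⟩⟩
  loopless := ⟨fun x ⟨h, _⟩ => G.loopless.irrefl x h⟩

lemma Gres_le {V : Type*} (G : SimpleGraph V) (A : Finset V) : Gres G A ≤ G :=
  fun _ _ h => h.1

lemma Gres_adj {V : Type*} (G : SimpleGraph V) (A : Finset V) {x y : V} :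
    (Gres G A).Adj x y ↔ G.Adj x y ∧ x ∈ A ∧ y ∈ A := Iff.rfl

lemma Gres_univ {V : Type*} [Fintype V] (G : SimpleGraph V) : Gres G univ = G := by
  ext x y; simp [Gres_adj]

lemma nE_eq_ncard {V : Type*} (H : SimpleGraph V) : (nE H : ℕ) = H.edgeSet.ncard :=
  Nat.card_coe_set_eq _

lemma nE_mono {V : Type*} [Fintype V] {F H : SimpleGraph V} (h : F ≤ H) : nE F ≤ nE H := by
  rw [nE_eq_ncard, nE_eq_ncard]
  exact Set.ncard_le_ncard (SimpleGraph.edgeSet_mono h) (Set.toFinite _)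

lemma two_le_card {V : Type*} [Fintype V] {G : SimpleGraph V} {A : Finset V}
    (h : 0 < nE (Gres G A)) : 2 ≤ A.card := by
  rw [nE] at h
  have : (Gres G A).edgeSet.Nonempty := by
    rw [Set.nonempty_iff_ne_empty]
    intro hcon
    rw [hcon] at h; simp at h
  obtain ⟨e, he⟩ := this
  induction e with
  | _ x y =>
    rw [SimpleGraph.mem_edgeSet, Gres_adj] at he
    exact Finset.one_lt_card.mpr ⟨x, he.2.1, y, he.2.2, (G.ne_of_adj he.1)⟩

lemma gfun_diff (t : ℝ) (ht : 0 < t) (b a : ℝ) (h0 : 0 ≤ b) (h : b ≤ a) :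
    2*(a-b) - (a-b)/Lfun t a ≤ gfun t a - gfun t b := by
  have hm := Lfun_mono t ht h0 h
  have hbp := Lfun_pos t b
  have hap := Lfun_pos t a
  unfold gfun
  have key : b/Lfun t a ≤ b/Lfun t b := div_le_div_of_nonneg_left h0 hbp hm
  have expand : a*(2 - 1/Lfun t a) - b*(2 - 1/Lfun t b)
      = 2*(a-b) - a/Lfun t a + b/Lfun t b := by
    field_simp; ring
  rw [expand]
  have : (a-b)/Lfun t a = a/Lfun t a - b/Lfun t a := by ring
  linarith

set_option maxHeartbeats 1000000 in
/-- For every `t > 0`, every graph `G` contains a subgraph `H` (vertex set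
`A`) with average degree at least `d(G)/2` and minimum degree at least `d(G)/4` that is a
robust `t`-vertex-expander: for every `X ⊆ A` with `|X| ≤ |A|/2` and every subgraph `F ⊆ H`
with `e(F) ≤ d(H) ρ_t(|X|) |X|`, the external neighbourhood of `X` in `H ∖ F` has size at
least `2 ρ_t(|X|) |X|`. -/
theorem stmt_9 {V : Type*} [Fintype V] (G : SimpleGraph V) (t : ℝ) (ht : 0 < t) :
    ∃ (A : Finset V) (H : SimpleGraph V), IsSubgraphPair G A H ∧
      avgDeg G Finset.univ / 2 ≤ avgDeg H A ∧
      (∀ v ∈ A, avgDeg G Finset.univ / 4 ≤ (Nat.card {w | H.Adj v w} : ℝ)) ∧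
      (∀ X ⊆ A, (X.card : ℝ) ≤ (A.card : ℝ) / 2 →
        ∀ F : SimpleGraph V, F ≤ H → (nE F : ℝ) ≤ avgDeg H A * rho t X.card * X.card →
          2 * rho t X.card * X.card ≤
            (Nat.card {v | v ∉ X ∧ ∃ x ∈ X, (H \ F).Adj x v} : ℝ)) := by
  classical
  by_cases hE : nE G = 0
  · refine ⟨∅, ⊥, ⟨bot_le, fun x y h => absurd h (by simp)⟩, ?_, ?_, ?_⟩
    · have h1 : avgDeg G univ = 0 := by
        rw [avgDeg, hE]; simp
      have h2 : avgDeg (⊥ : SimpleGraph V) ∅ = 0 := by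
        rw [avgDeg, nE]; simp
      rw [h1, h2]; norm_num
    · intro v hv; exact absurd hv (Finset.notMem_empty v)
    · intro X hX _ F _ _
      have hX0 : X = ∅ := Finset.subset_empty.mp hX
      subst hX0
      have : rho t ((∅ : Finset V).card : ℝ) = 0 := by
        rw [rho, if_pos]; simpa using ht
      rw [this]
      simpa using Nat.cast_nonneg _
  · -- main case
    have hEpos : 0 < nE G := Nat.pos_of_ne_zero hE
    have hVne : Nonempty V := by
      by_contra hcon
      rw [not_nonempty_iff] at hcon
      exact hE (by rw [nE]; exact Nat.card_of_isEmpty)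
    have hUne : (univ : Finset V).Nonempty := univ_nonempty
    set n := (univ : Finset V).card with hn
    have hn0 : (0:ℝ) < n := by exact_mod_cast card_pos.mpr hUne
    set f : Finset V → ℝ := fun B => (nE (Gres G B) : ℝ) / gfun t B.card with hf
    obtain ⟨A, hAT, hAmax'⟩ := (univ.powerset.filter (fun B => B.Nonempty)).exists_max_image f
      ⟨univ, by simp [hUne]⟩
    have hAne : A.Nonempty := (Finset.mem_filter.mp hAT).2
    set lam := f A with hlam
    have hgpos : ∀ B : Finset V, B.Nonempty → 0 < gfun t B.card := by
      intro B hB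
      have h1 : (1:ℝ) ≤ B.card := by exact_mod_cast card_pos.mpr hB
      have := gfun_lb t B.card (by positivity)
      linarith
    have hAmax : ∀ B : Finset V, B.Nonempty → (nE (Gres G B) : ℝ) ≤ lam * gfun t B.card := by
      intro B hB
      have hm := hAmax' B (Finset.mem_filter.mpr ⟨Finset.mem_powerset.mpr (subset_univ B), hB⟩)
      rw [hlam]
      exact (div_le_iff₀ (hgpos B hB)).mp hm
    have heH : (nE (Gres G A) : ℝ) = lam * gfun t A.card := by
      rw [hlam, hf]
      rw [div_mul_cancel₀ _ (ne_of_gt (hgpos A hAne))]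
    have hlamlb : (nE G : ℝ) / gfun t n ≤ lam := by
      have hm := hAmax' univ (by simp [hUne])
      rw [hlam]
      simpa [hf, Gres_univ, hn] using hm
    have hlam0 : 0 < lam := by
      refine lt_of_lt_of_le ?_ hlamlb
      have h1 : (1:ℝ) ≤ nE G := by exact_mod_cast hEpos
      exact div_pos (by linarith) (hgpos univ hUne)
    set a := A.card with haa
    have ha0 : (0:ℝ) < a := by exact_mod_cast card_pos.mpr hAne
    set d := avgDeg G univ with hd
    have hdval : d = 2 * nE G / n := rfl
    have hd0 : 0 ≤ d := by rw [hdval]; exact div_nonneg (mul_nonneg (by norm_num) (Nat.cast_nonneg _)) (Nat.cast_nonneg _)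
    have hd4 : d / 4 ≤ lam := by
      have h2n : gfun t n ≤ 2*n := gfun_ub t n (Nat.cast_nonneg _)
      have hgn : 0 < gfun t n := hgpos univ hUne
      have h1 : d/4 = (nE G : ℝ)/(2*n) := by rw [hdval]; field_simp; ring
      have h2 : (nE G:ℝ)/(2*n) ≤ (nE G:ℝ)/gfun t n :=
        div_le_div_of_nonneg_left (Nat.cast_nonneg _) hgn h2n
      linarith
    have hHA : ∀ x y, (Gres G A).Adj x y → x ∈ A ∧ y ∈ A := fun x y h => h.2
    have heposH : 0 < nE (Gres G A) := by
      by_contra hcon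
      push_neg at hcon
      have h0 : nE (Gres G A) = 0 := Nat.le_zero.mp hcon
      rw [h0] at heH
      have := mul_pos hlam0 (hgpos A hAne)
      rw [← heH] at this
      norm_num at this
    have ha2 : 2 ≤ a := two_le_card heposH
    have havg : avgDeg (Gres G A) A = 2 * (lam * gfun t a) / a := by
      rw [avgDeg, heH]
    have havg_lb : 3*lam ≤ avgDeg (Gres G A) A := by
      rw [havg, le_div_iff₀ ha0]
      have := gfun_lb t a (Nat.cast_nonneg _)
      nlinarith
    refine ⟨A, Gres G A, ⟨Gres_le G A, hHA⟩, by linarith, ?_, ?_⟩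
    · -- min degree
      intro v hv
      by_contra hdeg
      push_neg at hdeg
      set dv := Nat.card {w | (Gres G A).Adj v w} with hdv
      have hA'ne : (A.erase v).Nonempty := by
        rw [← Finset.card_pos, Finset.card_erase_of_mem hv]; omega
      have hsub : (Gres G A).edgeSet ⊆
          (Gres G (A.erase v)).edgeSet ∪ (Gres G A).incidenceSet v := by
        intro e he
        induction e with
        | _ p q =>
          rw [SimpleGraph.mem_edgeSet] at he
          by_cases hpv : p = v
          · exact Or.inr ⟨(SimpleGraph.mem_edgeSet _).mpr he, by rw [hpv]; exact Sym2.mem_mk_left v q⟩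
          · by_cases hqv : q = v
            · exact Or.inr ⟨(SimpleGraph.mem_edgeSet _).mpr he, by rw [hqv]; exact Sym2.mem_mk_right p v⟩
            · refine Or.inl ?_
              rw [SimpleGraph.mem_edgeSet]
              exact ⟨he.1, Finset.mem_erase.mpr ⟨hpv, he.2.1⟩, Finset.mem_erase.mpr ⟨hqv, he.2.2⟩⟩
      have hcountN : nE (Gres G A) ≤ nE (Gres G (A.erase v)) + dv := by
        have h3 : ((Gres G A).incidenceSet v).ncard = dv := by
          rw [← Nat.card_coe_set_eq, hdv]
          exact Nat.card_congr (SimpleGraph.incidenceSetEquivNeighborSet _ v)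
        calc nE (Gres G A)
            ≤ ((Gres G (A.erase v)).edgeSet ∪ (Gres G A).incidenceSet v).ncard := by
              rw [nE_eq_ncard]; exact Set.ncard_le_ncard hsub (Set.toFinite _)
          _ ≤ (Gres G (A.erase v)).edgeSet.ncard + ((Gres G A).incidenceSet v).ncard :=
              Set.ncard_union_le _ _
          _ = nE (Gres G (A.erase v)) + dv := by rw [← nE_eq_ncard, h3]
      have herase : (((A.erase v).card : ℕ) : ℝ) = (a:ℝ) - 1 := by
        rw [Finset.card_erase_of_mem hv]
        push_cast [show 1 ≤ A.card by omega]
        ring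
      have hupper : (nE (Gres G (A.erase v)) : ℝ) ≤ lam * gfun t ((a:ℝ)-1) := by
        have h := hAmax (A.erase v) hA'ne
        rwa [herase] at h
      have hgdiff : 3/2 ≤ gfun t a - gfun t ((a:ℝ)-1) := by
        have h1 := gfun_diff t ht ((a:ℝ)-1) (a:ℝ) (show (0:ℝ) ≤ (a:ℝ)-1 by
          have : (2:ℝ) ≤ a := by exact_mod_cast ha2
          linarith) (by linarith)
        have h2 : 1/Lfun t a ≤ 1/2 :=
          one_div_le_one_div_of_le (by norm_num) (two_le_Lfun t a)
        have h3 : ((a:ℝ) - ((a:ℝ)-1)) = 1 := by ring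
        rw [h3] at h1
        have h4 : (0:ℝ) < Lfun t a := Lfun_pos t a
        linarith
      have hdv_lam : (dv:ℝ) < lam := lt_of_lt_of_le hdeg hd4
      have hcastN : (nE (Gres G A) : ℝ) ≤ (nE (Gres G (A.erase v)) : ℝ) + (dv:ℝ) := by
        exact_mod_cast hcountN
      nlinarith [mul_le_mul_of_nonneg_left hgdiff hlam0.le]
    · -- expansion
      intro X hXA hXhalf F hFH hFe
      rw [← haa] at hXhalf
      by_cases hXt : ((X.card:ℕ):ℝ) < t
      · rw [rho, if_pos hXt]
        simpa using Nat.cast_nonneg _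
      · push_neg at hXt
        set x := ((X.card : ℕ) : ℝ) with hx
        have hx0 : 0 < x := lt_of_lt_of_le ht hXt
        have hXne : X.Nonempty := by
          rw [← card_pos]
          have hxx : (0:ℝ) < (X.card:ℝ) := hx ▸ hx0
          exact_mod_cast hxx
        set L := Real.logb 2 (4*x/t) with hLd
        set r := 1/(256*L^2) with hrd
        have h2L : 2 ≤ L := hLd ▸ two_le_logb ht hXt
        have hr0 : 0 < r := by rw [hrd]; positivity
        have hrho : rho t x = r := by rw [rho, if_neg (not_lt.mpr hXt)]
        by_contra hcon
        push_neg at hcon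
        rw [hrho] at hcon hFe
        set N := {v : V | v ∉ X ∧ ∃ u ∈ X, ((Gres G A) \ F).Adj u v} with hNd
        have hNfin : N.Finite := Set.toFinite N
        clear_value N
        set S := X ∪ hNfin.toFinset with hSd
        clear_value S
        have hSA : S ⊆ A := by
          rw [hSd]
          apply Finset.union_subset hXA
          intro v hvmem
          rw [Set.Finite.mem_toFinset, hNd] at hvmem
          obtain ⟨_, w, hw, hadj⟩ := hvmem
          exact (hHA w v ((SimpleGraph.sdiff_adj _ _ _ _).mp hadj).1).2
        have hSne : S.Nonempty := hXne.mono (by rw [hSd]; exact subset_union_left)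
        have hXlta : X.card < a := by
          have hxa : (X.card:ℝ) < a := by
            rw [← hx]; linarith
          exact_mod_cast hxa
        have hANne : (A \ X).Nonempty := by
          rw [← card_pos, card_sdiff_of_subset hXA]
          omega
        have main : ∀ u w : V, (Gres G A).Adj u w → u ∈ X →
            s(u,w) ∈ (Gres G S).edgeSet ∪ (Gres G (A \ X)).edgeSet ∪ F.edgeSet := by
          intro u w hadj hu
          by_cases hfa : F.Adj u w
          · exact Or.inr ((SimpleGraph.mem_edgeSet F).mpr hfa)
          · refine Or.inl (Or.inl ?_)
            rw [SimpleGraph.mem_edgeSet, Gres_adj]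
            refine ⟨hadj.1, by rw [hSd]; exact Finset.mem_union_left _ hu, ?_⟩
            by_cases hw : w ∈ X
            · rw [hSd]; exact Finset.mem_union_left _ hw
            · rw [hSd]
              apply Finset.mem_union_right
              rw [Set.Finite.mem_toFinset, hNd]
              exact ⟨hw, u, hu, (SimpleGraph.sdiff_adj _ _ _ _).mpr ⟨hadj, hfa⟩⟩
        have hsplit : (Gres G A).edgeSet ⊆
            (Gres G S).edgeSet ∪ (Gres G (A \ X)).edgeSet ∪ F.edgeSet := by
          intro e he
          induction e with
          | _ u w =>
            rw [SimpleGraph.mem_edgeSet] at he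
            by_cases hu : u ∈ X
            · exact main u w he hu
            · by_cases hw : w ∈ X
              · have h := main w u he.symm hw
                rwa [Sym2.eq_swap] at h
              · refine Or.inl (Or.inr ?_)
                rw [SimpleGraph.mem_edgeSet, Gres_adj]
                exact ⟨he.1, Finset.mem_sdiff.mpr ⟨he.2.1, hu⟩, Finset.mem_sdiff.mpr ⟨he.2.2, hw⟩⟩
        have hcount : (nE (Gres G A) :ℝ) ≤
            (nE (Gres G S) : ℝ) + (nE (Gres G (A \ X)) : ℝ) + (nE F : ℝ) := by
          have hnat : nE (Gres G A) ≤ nE (Gres G S) + nE (Gres G (A \ X)) + nE F := by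
            rw [nE_eq_ncard, nE_eq_ncard, nE_eq_ncard, nE_eq_ncard]
            calc (Gres G A).edgeSet.ncard
                ≤ ((Gres G S).edgeSet ∪ (Gres G (A \ X)).edgeSet ∪ F.edgeSet).ncard :=
                  Set.ncard_le_ncard hsplit (Set.toFinite _)
              _ ≤ ((Gres G S).edgeSet ∪ (Gres G (A \ X)).edgeSet).ncard + F.edgeSet.ncard :=
                  Set.ncard_union_le _ _
              _ ≤ (Gres G S).edgeSet.ncard + (Gres G (A \ X)).edgeSet.ncard + F.edgeSet.ncard := by
                  have := Set.ncard_union_le (Gres G S).edgeSet (Gres G (A \ X)).edgeSet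
                  omega
          exact_mod_cast hnat
        clear hsplit main
        have hScard : ((S.card:ℕ):ℝ) ≤ x*(1+2*r) := by
          have h1 : S.card ≤ X.card + hNfin.toFinset.card := by
            rw [hSd]; exact card_union_le _ _
          have h2 : (hNfin.toFinset.card : ℝ) = (Nat.card N : ℝ) := by
            rw [Nat.card_coe_set_eq, Set.ncard_eq_toFinset_card N hNfin]
          have h3 : ((S.card:ℕ):ℝ) ≤ x + (Nat.card N : ℝ) := by
            rw [← h2, hx]
            exact_mod_cast h1
          nlinarith [hcon]
        have hgS : gfun t ((S.card:ℕ):ℝ) ≤ gfun t (x*(1+2*r)) :=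
          gfun_mono t ht (Nat.cast_nonneg _) hScard
        have heS : (nE (Gres G S) : ℝ) ≤ lam * gfun t ((S.card:ℕ):ℝ) := hAmax S hSne
        have heAX : (nE (Gres G (A \ X)) : ℝ) ≤ lam * gfun t ((a:ℝ)-x) := by
          have h := hAmax (A \ X) hANne
          have hc : (((A \ X).card:ℕ):ℝ) = (a:ℝ) - x := by
            rw [card_sdiff_of_subset hXA, hx]
            push_cast [show X.card ≤ A.card by omega]
            ring
          rwa [hc] at h
        have heF : (nE F : ℝ) ≤ 4*lam*r*x := by
          rw [havg] at hFe
          have hga_ub := gfun_ub t a (Nat.cast_nonneg _)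
          calc (nE F:ℝ) ≤ 2*(lam * gfun t a)/a * r * x := hFe
            _ ≤ 4*lam*r*x := by
              rw [div_mul_eq_mul_div, div_mul_eq_mul_div, div_le_iff₀ ha0]
              nlinarith [mul_le_mul_of_nonneg_left hga_ub
                (mul_nonneg (mul_nonneg (mul_nonneg (by norm_num) hlam0.le) hr0.le) hx0.le : (0:ℝ) ≤ 2*lam*r*x)]
        have h2xa : 2*x ≤ (a:ℝ) := by linarith
        have hkey := key_ineq t x a L r ht hXt h2xa hLd hrd
        have hmid : (nE (Gres G S) : ℝ) + (nE (Gres G (A \ X)) : ℝ) + (nE F : ℝ)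
            ≤ lam * gfun t (x*(1+2*r)) + lam * gfun t ((a:ℝ)-x) + 4*lam*r*x := by
          have := mul_le_mul_of_nonneg_left hgS hlam0.le
          linarith
        have hlast : lam * gfun t (x*(1+2*r)) + lam * gfun t ((a:ℝ)-x) + 4*lam*r*x
            < lam * gfun t a := by nlinarith [hkey, hlam0]
        rw [heH] at hcount
        linarith
end
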